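/- arXiv:1905.06931 — 8 statements merged into one kernel-verified Lean document; each statement's English description precedes it below -/
import Mathlib

section
/- Let G be a group acting freely on the right on a type P. Let C be the set of maps τ : P → G satisfying τ (p • g) = g⁻¹ * τ p * g for all p : P and g : G, and let 𝒢 be the set of maps f : P → P such that f (p • g) = (f p) • g for all p, g and such that for every p there exists g : G with f p = p • g. Then the map Φ sending τ to the function p ↦ p • τ p is a bijection from C onto 𝒢, and moreover for all τ, τ' ∈ C one has (Φ τ) ∘ (Φ τ') = Φ (fun p => τ p * τ' p), so pointwise multiplication in C corresponds to composition of gauge symmetries. -/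
/-- The gauge group of a Klein bundle: for a free right action of `G` on `P`, the map
`τ ↦ (p ↦ p • τ p)` is a bijection from the space of `G`-valued equivariant functions
(transforming in the anti-adjoint representation) onto the group of gauge symmetries,
and pointwise multiplication corresponds to composition. -/
theorem gauge_symmetries_equiv {P G : Type*} [Group G] (act : P → G → P)
    (act_one : ∀ p, act p 1 = p)
    (act_mul : ∀ p g h, act (act p g) h = act p (g * h))
    (act_free : ∀ p g, act p g = p → g = 1) :
    Set.BijOn (fun τ : P → G => fun p => act p (τ p))
      {τ : P → G | ∀ p g, τ (act p g) = g⁻¹ * τ p * g}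
      {f : P → P | (∀ p g, f (act p g) = act (f p) g) ∧ ∀ p, ∃ g, f p = act p g} ∧
    ∀ τ τ' : P → G,
      τ ∈ {τ : P → G | ∀ p g, τ (act p g) = g⁻¹ * τ p * g} →
      τ' ∈ {τ : P → G | ∀ p g, τ (act p g) = g⁻¹ * τ p * g} →
      ((fun p => act p (τ p)) ∘ (fun p => act p (τ' p)))
        = (fun p => act p (τ p * τ' p)) := by

  have key : ∀ p g g', act p g = act p g' → g = g' := by
    intro p g g' h
    have h2 : act p (g' * g⁻¹) = p := by
      rw [← act_mul, ← h, act_mul, mul_inv_cancel, act_one]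
    have := act_free _ _ h2
    rwa [mul_inv_eq_one, eq_comm] at this
  constructor
  · refine ⟨?_, ?_, ?_⟩
    · intro τ hτ
      refine ⟨fun p g => ?_, fun p => ⟨τ p, rfl⟩⟩
      simp only [hτ p g, act_mul]
      congr 1
      group
    · intro τ hτ τ' hτ' h
      funext p
      exact key p _ _ (congrFun h p)
    · intro f hf
      choose g hg using hf.2
      refine ⟨g, fun p h => ?_, funext fun p => (hg p).symm⟩
      apply key (act p h)
      rw [← hg (act p h), hf.1, hg p, act_mul, act_mul]
      congr 1
      group
  · intro τ τ' hτ hτ'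
    funext p
    simp only [Function.comp_apply, hτ p (τ' p), act_mul]
    congr 1
    group
end

section
/- Let n : ℕ, let A : ℝ → Matrix (Fin n) (Fin n) ℝ be any function, and let g₁, g₂ : ℝ → Matrix (Fin n) (Fin n) ℝ satisfy, for every t ∈ ℝ and i = 1, 2, HasDerivAt gᵢ (gᵢ t * A t) t (derivative in the normed space of matrices). If g₁ t is invertible for every t, then g₂ t = g₂ 0 * (g₁ 0)⁻¹ * g₁ t for all t ∈ ℝ; that is, any two solutions of the development equation g′ = g·A differ by a constant left translation. -/
attribute [local instance] Matrix.normedAddCommGroup Matrix.normedSpace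

/-!
If `g₁' = g₁ A` and `g₂' = g₂ A` with `g₁` invertible, then `h := g₂ g₁⁻¹` is constant. At a fixed
time `t`, write `h s - h t = (g₂ s - h t g₁ s) g₁(s)⁻¹`: the first factor vanishes at `t` together
with its derivative `(g₂ t - h t g₁ t) A t`, and the second is merely continuous at `t`, which is
enough for the product to have derivative `0` at `t`.
-/

theorem ContinuousLinearMap.hasDerivAt_apply₂_of_hasDerivAt_zero {𝕜 E F G : Type*}
    [NontriviallyNormedField 𝕜] [NormedAddCommGroup E] [NormedSpace 𝕜 E]
    [NormedAddCommGroup F] [NormedSpace 𝕜 F] [NormedAddCommGroup G] [NormedSpace 𝕜 G]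
    (B : E →L[𝕜] F →L[𝕜] G) {d : 𝕜 → E} {k : 𝕜 → F} {t : 𝕜}
    (hd : HasDerivAt d 0 t) (hdt : d t = 0) (hk : ContinuousAt k t) :
    HasDerivAt (fun s => B (d s) (k s)) 0 t := by
  rw [hasDerivAt_iff_isLittleO] at hd ⊢
  simp only [hdt, map_zero, zero_apply, sub_zero, smul_zero] at hd ⊢
  simpa only [mul_one] using B.isBoundedBilinearMap.isBigO_comp.trans_isLittleO
    (hd.norm_left.mul_isBigO (hk.tendsto.isBigO_one 𝕜).norm_left)

namespace Matrix

noncomputable def mulCLM (𝕜 ι : Type*) [NontriviallyNormedField 𝕜] [CompleteSpace 𝕜]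
    [Fintype ι] : Matrix ι ι 𝕜 →L[𝕜] Matrix ι ι 𝕜 →L[𝕜] Matrix ι ι 𝕜 :=
  (LinearMap.mul 𝕜 (Matrix ι ι 𝕜)).toContinuousBilinearMap

variable {𝕜 ι : Type*} [NontriviallyNormedField 𝕜] [CompleteSpace 𝕜] [Fintype ι]

theorem _root_.HasDerivAt.matrix_const_mul {g : 𝕜 → Matrix ι ι 𝕜} {g' : Matrix ι ι 𝕜} {t : 𝕜}
    (c : Matrix ι ι 𝕜) (hg : HasDerivAt g g' t) : HasDerivAt (fun s => c * g s) (c * g') t :=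
  (mulCLM 𝕜 ι c).hasFDerivAt.comp_hasDerivAt t hg

variable [DecidableEq ι]

theorem hasDerivAt_mul_inv_eq_zero {g₁ g₂ : 𝕜 → Matrix ι ι 𝕜} {a : Matrix ι ι 𝕜} {t : 𝕜}
    (h₁ : HasDerivAt g₁ (g₁ t * a) t) (h₂ : HasDerivAt g₂ (g₂ t * a) t)
    (hinv : ∀ s, IsUnit (g₁ s)) :
    HasDerivAt (fun s => g₂ s * (g₁ s)⁻¹) 0 t := by
  have hdet : ∀ s, IsUnit (g₁ s).det := fun s => (isUnit_iff_isUnit_det _).mp (hinv s)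
  set c := g₂ t * (g₁ t)⁻¹
  have hc : c * g₁ t = g₂ t := nonsing_inv_mul_cancel_right _ _ (hdet t)
  have hd : HasDerivAt (fun s => g₂ s - c * g₁ s) 0 t := by
    refine (h₂.sub (h₁.matrix_const_mul c)).congr_deriv ?_
    rw [← Matrix.mul_assoc, hc, sub_self]
  have hk : ContinuousAt (fun s => (g₁ s)⁻¹) t :=
    (continuousAt_matrix_inv _ (NormedRing.inverse_continuousAt (hdet t).unit)).comp
      h₁.continuousAt
  have hprod := (mulCLM 𝕜 ι).hasDerivAt_apply₂_of_hasDerivAt_zero hd (by rw [hc, sub_self]) hk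
  refine (hasDerivAt_add_const_iff (-c)).mp (hprod.congr_of_eventuallyEq ?_)
  refine Filter.Eventually.of_forall fun s => ?_
  change _ = (g₂ s - c * g₁ s) * (g₁ s)⁻¹
  rw [Matrix.sub_mul, Matrix.mul_assoc, mul_nonsing_inv _ (hdet s), Matrix.mul_one,
    sub_eq_add_neg]

end Matrix

/-- Any two solutions of the development equation `g′ = g · A` differ by a constant
left translation. -/
theorem development_unique_up_to_left_translation {n : ℕ}
    (A g₁ g₂ : ℝ → Matrix (Fin n) (Fin n) ℝ)
    (h₁ : ∀ t : ℝ, HasDerivAt g₁ (g₁ t * A t) t)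
    (h₂ : ∀ t : ℝ, HasDerivAt g₂ (g₂ t * A t) t)
    (hinv : ∀ t : ℝ, IsUnit (g₁ t)) :
    ∀ t : ℝ, g₂ t = g₂ 0 * (g₁ 0)⁻¹ * g₁ t := by
  intro t
  have hderiv s := Matrix.hasDerivAt_mul_inv_eq_zero (h₁ s) (h₂ s) hinv
  have hconst : g₂ t * (g₁ t)⁻¹ = g₂ 0 * (g₁ 0)⁻¹ :=
    is_const_of_deriv_eq_zero (fun s => (hderiv s).differentiableAt) (fun s => (hderiv s).deriv) t 0
  rw [← hconst, Matrix.nonsing_inv_mul_cancel_right _ _ ((g₁ t).isUnit_iff_isUnit_det.mp (hinv t))]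
end

section
/- Let n : ℕ, let A : ℝ → Matrix (Fin n) (Fin n) ℝ be continuous, and let g : ℝ → Matrix (Fin n) (Fin n) ℝ satisfy HasDerivAt g (g t * A t) t for every t ∈ ℝ. If g t₀ is invertible for some t₀ ∈ ℝ, then g t is invertible for every t ∈ ℝ. -/
/-!
If `g t` were singular, choose a row vector `v ≠ 0` with `v g(t) = 0`. Then `w(s) = v g(s)` solves
the linear equation `w' = w A(s)` and vanishes at `t`, so by uniqueness of solutions `w ≡ 0`;
in particular `v g(t₀) = 0`, which is impossible since `g t₀` is invertible.
-/

attribute [local instance] Matrix.normedAddCommGroup Matrix.normedSpace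

open Set Topology Matrix

/- The zero set of `w` is open by local uniqueness (the zero function is also a solution,
and `L` is locally bounded), closed by continuity, hence all of `ℝ`. -/
theorem ODE_linear_solution_eq_zero {E : Type*} [NormedAddCommGroup E] [NormedSpace ℝ E]
    {L : ℝ → E →L[ℝ] E} (hL : Continuous L) {w : ℝ → E}
    (hw : ∀ t, HasDerivAt w (L t (w t)) t) {t₁ : ℝ} (h₁ : w t₁ = 0) : w = 0 := by
  have hopen : IsOpen {t | w t = 0} := by
    refine isOpen_iff_mem_nhds.2 fun t (ht : w t = 0) => ?_
    have hLip : ∀ᶠ s in 𝓝 t, LipschitzOnWith (‖L t‖₊ + 1) (L s) univ := by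
      filter_upwards [(hL.nnnorm.tendsto t).eventually (gt_mem_nhds (lt_add_one ‖L t‖₊))]
        with s hs using ((L s).lipschitz.weaken hs.le).lipschitzOnWith
    exact ODE_solution_unique_of_eventually (g := 0) hLip
      (.of_forall fun s => ⟨hw s, mem_univ _⟩) (.of_forall fun s => ⟨by simp, mem_univ _⟩) ht
  have hclosed : IsClosed {t | w t = 0} :=
    isClosed_eq (continuous_iff_continuousAt.2 fun t => (hw t).continuousAt) continuous_const
  funext t
  exact eq_univ_iff_forall.1 (IsClopen.eq_univ ⟨hclosed, hopen⟩ ⟨t₁, h₁⟩) t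

section VecMul

variable {m k : Type*} [Fintype m]

noncomputable def Matrix.vecMulCLM : Matrix m k ℝ →ₗ[ℝ] (m → ℝ) →L[ℝ] (k → ℝ) :=
  LinearMap.toContinuousLinearMap.toLinearMap ∘ₗ (vecMulBilin ℝ ℝ).flip

@[simp]
theorem Matrix.vecMulCLM_apply (M : Matrix m k ℝ) (v : m → ℝ) : vecMulCLM M v = v ᵥ* M :=
  rfl

theorem HasDerivAt.vecMul [Fintype k] {g : ℝ → Matrix m k ℝ} {g' : Matrix m k ℝ} {t : ℝ}
    (hg : HasDerivAt g g' t) (v : m → ℝ) : HasDerivAt (fun s => v ᵥ* g s) (v ᵥ* g') t :=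
  (LinearMap.toContinuousLinearMap (vecMulBilin ℝ ℝ v)).hasFDerivAt.comp_hasDerivAt (f := g) t hg

end VecMul

/-- A solution of the development equation `g′ = g · A` which is invertible at one
time is invertible at every time: the development takes values in `GL(n, ℝ)`. -/
theorem development_stays_invertible {n : ℕ}
    (A g : ℝ → Matrix (Fin n) (Fin n) ℝ)
    (hA : Continuous A)
    (hg : ∀ t : ℝ, HasDerivAt g (g t * A t) t)
    (t₀ : ℝ) (h0 : IsUnit (g t₀)) :
    ∀ t : ℝ, IsUnit (g t) := by
  intro t
  by_contra hsing
  rw [isUnit_iff_isUnit_det, isUnit_iff_ne_zero, not_not] at hsing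
  obtain ⟨v, hv, hvt⟩ := exists_vecMul_eq_zero_iff.2 hsing
  have hw : ∀ s, HasDerivAt (fun s => v ᵥ* g s) (vecMulCLM (A s) (v ᵥ* g s)) s := fun s => by
    rw [vecMulCLM_apply, vecMul_vecMul]
    exact (hg s).vecMul v
  have hL : Continuous fun s => vecMulCLM (A s) :=
    vecMulCLM.continuous_of_finiteDimensional.comp hA
  have hvt₀ : v ᵥ* g t₀ = 0 := congrFun (ODE_linear_solution_eq_zero hL hw hvt) t₀
  exact ((isUnit_iff_isUnit_det _).1 h0).ne_zero (exists_vecMul_eq_zero_iff.1 ⟨v, hv, hvt₀⟩)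
end

section
/- Let m : ℕ and let Σ : Fin m → Fin m → ℝ be antisymmetric. Then Σ satisfies the Plücker relations Σ i j * Σ k l + Σ j k * Σ i l + Σ k i * Σ j l = 0 for all i, j, k, l : Fin m if and only if Σ is simple, i.e. there exist X, Y : Fin m → ℝ with Σ i j = X i * Y j − X j * Y i for all i, j. -/
/-- An antisymmetric array `S : Fin m → Fin m → ℝ` satisfies the Plücker relations
if and only if it is simple (decomposable as a wedge of two vectors). -/
theorem plucker_iff_simple {m : ℕ} (S : Fin m → Fin m → ℝ)
    (hS : ∀ i j, S i j = -S j i) :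
    (∀ i j k l, S i j * S k l + S j k * S i l + S k i * S j l = 0) ↔
    ∃ X Y : Fin m → ℝ, ∀ i j, S i j = X i * Y j - X j * Y i := by
  constructor
  · intro hP
    by_cases h0 : ∀ i j, S i j = 0
    · exact ⟨0, 0, fun i j => by simp [h0]⟩
    · push_neg at h0
      obtain ⟨a, b, hab⟩ := h0
      refine ⟨fun i => S i b / S a b, fun j => S a j, fun i j => ?_⟩
      have h := hP i j a b
      field_simp
      rw [hS j a] at h
      linarith
  · rintro ⟨X, Y, h⟩ i j k l
    simp only [h]; ring
end

section
/- Let R be a commutative ring, n, m : ℕ, and M : Matrix (Fin (n+1)) (Fin m) R. For any i : Fin n → Fin m and j : Fin (n+2) → Fin m, the quadratic Plücker relation among maximal minors holds: ∑_{l : Fin (n+2)} (−1)^(l : ℕ) * det (M.submatrix id (Fin.snoc i (j l))) * det (M.submatrix id (j ∘ (Fin.succAbove l))) = 0, where Fin.snoc i (j l) is the (n+1)-tuple of columns (i 0, …, i (n−1), j l) and j ∘ Fin.succAbove l is the (n+1)-tuple obtained from j by deleting its l-th entry. -/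
/-- The quadratic Plücker relations among the maximal minors of an
`(n+1) × m` matrix. -/
theorem plucker_relations_minors {R : Type*} [CommRing R] (n m : ℕ)
    (M : Matrix (Fin (n + 1)) (Fin m) R)
    (i : Fin n → Fin m) (j : Fin (n + 2) → Fin m) :
    ∑ l : Fin (n + 2), (-1 : R) ^ (l : ℕ) *
        (M.submatrix id (Fin.snoc i (j l))).det *
        (M.submatrix id (j ∘ Fin.succAbove l)).det = 0 := by
  classical
  -- F l : minor with columns (i, j l); G l : minor with columns j minus l-th
  set F : Fin (n + 2) → R := fun l => (M.submatrix id (Fin.snoc i (j l))).det with hF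
  set G : Fin (n + 2) → R := fun l => (M.submatrix id (j ∘ Fin.succAbove l)).det with hG
  -- The auxiliary (n+2)×(n+2) matrix: first n+1 rows are M on columns j,
  -- last row is F.
  set A : Matrix (Fin (n + 2)) (Fin (n + 2)) R :=
    Matrix.of (Fin.snoc (fun k : Fin (n + 1) => fun l => M k (j l)) F) with hAdef
  have hArow : ∀ (k : Fin (n + 1)) (l : Fin (n + 2)),
      A k.castSucc l = M k (j l) := by
    intro k l
    simp [hAdef, Fin.snoc_castSucc]
  have hAlast : ∀ l, A (Fin.last (n + 1)) l = F l := by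
    intro l
    simp [hAdef, Fin.snoc_last]
  -- cofactor coefficients: the last row is this linear combination of the others
  set c : Fin (n + 2) → R :=
    Fin.snoc (fun k : Fin (n + 1) =>
      (-1 : R) ^ ((k : ℕ) + n) * (M.submatrix k.succAbove i).det) 0 with hc
  have hcomb : A (Fin.last (n + 1)) = ∑ k : Fin (n + 2), c k • A k := by
    funext l
    have hexp := Matrix.det_succ_column (M.submatrix id (Fin.snoc i (j l))) (Fin.last n)
    have hminor : ∀ k : Fin (n + 1),
        ((M.submatrix id (Fin.snoc i (j l))).submatrix k.succAbove
            (Fin.last n).succAbove) = M.submatrix k.succAbove i := by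
      intro k
      ext a b
      simp [Matrix.submatrix_apply, Fin.succAbove_last, Fin.snoc_castSucc]
    rw [hAlast, hF]
    simp only [Finset.sum_apply, Pi.smul_apply, smul_eq_mul]
    rw [hexp]
    rw [Fin.sum_univ_castSucc (f := fun k : Fin (n + 2) => c k * A k l)]
    have hclast : c (Fin.last (n + 1)) = 0 := by simp [hc]
    rw [hclast, zero_mul, add_zero]
    refine Finset.sum_congr rfl fun k _ => ?_
    have hck : c k.castSucc =
        (-1 : R) ^ ((k : ℕ) + n) * (M.submatrix k.succAbove i).det := by
      simp [hc]
    rw [hck, hArow, hminor k]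
    have : ((M.submatrix id (Fin.snoc i (j l))) k (Fin.last n)) = M k (j l) := by
      simp [Matrix.submatrix_apply, Fin.snoc_last]
    rw [this, Fin.val_last]
    ring
  -- hence det A = 0
  have hdetA : A.det = 0 := by
    have h1 : A.updateRow (Fin.last (n + 1)) (∑ k : Fin (n + 2), c k • A k) = A := by
      rw [← hcomb, Matrix.updateRow_eq_self]
    have h2 := Matrix.det_updateRow_sum A (Fin.last (n + 1)) c
    rw [h1] at h2
    have hclast : c (Fin.last (n + 1)) = 0 := by simp [hc]
    rw [hclast, zero_smul] at h2
    exact h2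
  -- expand det A along the last row
  have hexp : A.det = ∑ l : Fin (n + 2), (-1 : R) ^ ((n + 1) + (l : ℕ)) * F l * G l := by
    rw [Matrix.det_succ_row A (Fin.last (n + 1))]
    refine Finset.sum_congr rfl fun l _ => ?_
    have hsub : A.submatrix (Fin.last (n + 1)).succAbove l.succAbove =
        M.submatrix id (j ∘ Fin.succAbove l) := by
      ext a b
      simp only [Matrix.submatrix_apply, Fin.succAbove_last, Function.comp_apply, id]
      exact hArow a (l.succAbove b)
    rw [hsub, hAlast, Fin.val_last]
  rw [hexp] at hdetA
  have hfac : ∑ l : Fin (n + 2), (-1 : R) ^ ((n + 1) + (l : ℕ)) * F l * G l =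
      (-1 : R) ^ (n + 1) * ∑ l : Fin (n + 2), (-1 : R) ^ (l : ℕ) * F l * G l := by
    rw [Finset.mul_sum]
    refine Finset.sum_congr rfl fun l _ => ?_
    rw [pow_add]; ring
  rw [hfac] at hdetA
  have hu : ((-1 : R) ^ (n + 1)) * ((-1 : R) ^ (n + 1)) = 1 := by
    rw [← pow_add]
    exact Even.neg_one_pow (Even.add_self _)
  calc ∑ l : Fin (n + 2), (-1 : R) ^ (l : ℕ) * F l * G l
      = ((-1 : R) ^ (n + 1) * (-1 : R) ^ (n + 1)) *
        ∑ l : Fin (n + 2), (-1 : R) ^ (l : ℕ) * F l * G l := by rw [hu, one_mul]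
    _ = (-1 : R) ^ (n + 1) *
        ((-1 : R) ^ (n + 1) * ∑ l : Fin (n + 2), (-1 : R) ^ (l : ℕ) * F l * G l) := by ring
    _ = 0 := by rw [hdetA, mul_zero]
end

section
/- Let θ : Matrix (Fin 4) (Fin 4) ℝ with entries θ J a and det θ ≠ 0, and let T : Fin 4 → Fin 4 → Fin 4 → Fin 4 → ℝ be antisymmetric in its first two and in its last two arguments. Then T satisfies the direct linear simplicity system — (C1) ∑_J T I J a b * θ J a = 0 and ∑_J T I J a b * θ J b = 0 for all I, a, b, and (C2) ∑_J (T I J a b * θ J c + T I J a c * θ J b) = 0 for all I, a, b, c with c ≠ a and c ≠ b — if and only if there exists λ : ℝ such that T I J a b = λ * ∑_{K,L : Fin 4} ε I J K L * θ K a * θ L b for all I, J, a, b; that is, if and only if T is proportional to the simple array ⋆(θ ∧ θ). -/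
/-- The Levi-Civita symbol on `Fin 4`: the sign of the permutation `(i,j,k,l)` of
`(0,1,2,3)` when the indices are pairwise distinct, and `0` otherwise. -/
noncomputable def eps (i j k l : Fin 4) : ℝ :=
  ∏ a : Fin 4, ∏ b : Fin 4,
    if a < b then
      ((Int.sign (((![i, j, k, l] b : Fin 4) : ℕ) - (((![i, j, k, l] a : Fin 4) : ℕ)) : ℤ)) : ℝ)
    else 1

def epsZ (i j k l : Fin 4) : ℤ :=
  ∏ a : Fin 4, ∏ b : Fin 4,
    if a < b then
      Int.sign (((![i, j, k, l] b : Fin 4) : ℕ) - (((![i, j, k, l] a : Fin 4) : ℕ)) : ℤ)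
    else 1

lemma eps_cast (i j k l : Fin 4) : eps i j k l = ((epsZ i j k l : ℤ) : ℝ) := by
  unfold eps epsZ
  push_cast [apply_ite (fun z : ℤ => (z : ℝ))]
  ring

lemma epsv_0123 : eps 0 1 2 3 = (1 : ℝ) := by
  rw [eps_cast, show epsZ 0 1 2 3 = 1 from by decide]; norm_num

lemma epsv_0132 : eps 0 1 3 2 = (-1 : ℝ) := by
  rw [eps_cast, show epsZ 0 1 3 2 = -1 from by decide]; norm_num

lemma epsv_0213 : eps 0 2 1 3 = (-1 : ℝ) := by
  rw [eps_cast, show epsZ 0 2 1 3 = -1 from by decide]; norm_num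

lemma epsv_0231 : eps 0 2 3 1 = (1 : ℝ) := by
  rw [eps_cast, show epsZ 0 2 3 1 = 1 from by decide]; norm_num

lemma epsv_0312 : eps 0 3 1 2 = (1 : ℝ) := by
  rw [eps_cast, show epsZ 0 3 1 2 = 1 from by decide]; norm_num

lemma epsv_0321 : eps 0 3 2 1 = (-1 : ℝ) := by
  rw [eps_cast, show epsZ 0 3 2 1 = -1 from by decide]; norm_num

lemma epsv_1023 : eps 1 0 2 3 = (-1 : ℝ) := by
  rw [eps_cast, show epsZ 1 0 2 3 = -1 from by decide]; norm_num

lemma epsv_1032 : eps 1 0 3 2 = (1 : ℝ) := by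
  rw [eps_cast, show epsZ 1 0 3 2 = 1 from by decide]; norm_num

lemma epsv_1203 : eps 1 2 0 3 = (1 : ℝ) := by
  rw [eps_cast, show epsZ 1 2 0 3 = 1 from by decide]; norm_num

lemma epsv_1230 : eps 1 2 3 0 = (-1 : ℝ) := by
  rw [eps_cast, show epsZ 1 2 3 0 = -1 from by decide]; norm_num

lemma epsv_1302 : eps 1 3 0 2 = (-1 : ℝ) := by
  rw [eps_cast, show epsZ 1 3 0 2 = -1 from by decide]; norm_num

lemma epsv_1320 : eps 1 3 2 0 = (1 : ℝ) := by
  rw [eps_cast, show epsZ 1 3 2 0 = 1 from by decide]; norm_num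

lemma epsv_2013 : eps 2 0 1 3 = (1 : ℝ) := by
  rw [eps_cast, show epsZ 2 0 1 3 = 1 from by decide]; norm_num

lemma epsv_2031 : eps 2 0 3 1 = (-1 : ℝ) := by
  rw [eps_cast, show epsZ 2 0 3 1 = -1 from by decide]; norm_num

lemma epsv_2103 : eps 2 1 0 3 = (-1 : ℝ) := by
  rw [eps_cast, show epsZ 2 1 0 3 = -1 from by decide]; norm_num

lemma epsv_2130 : eps 2 1 3 0 = (1 : ℝ) := by
  rw [eps_cast, show epsZ 2 1 3 0 = 1 from by decide]; norm_num

lemma epsv_2301 : eps 2 3 0 1 = (1 : ℝ) := by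
  rw [eps_cast, show epsZ 2 3 0 1 = 1 from by decide]; norm_num

lemma epsv_2310 : eps 2 3 1 0 = (-1 : ℝ) := by
  rw [eps_cast, show epsZ 2 3 1 0 = -1 from by decide]; norm_num

lemma epsv_3012 : eps 3 0 1 2 = (-1 : ℝ) := by
  rw [eps_cast, show epsZ 3 0 1 2 = -1 from by decide]; norm_num

lemma epsv_3021 : eps 3 0 2 1 = (1 : ℝ) := by
  rw [eps_cast, show epsZ 3 0 2 1 = 1 from by decide]; norm_num

lemma epsv_3102 : eps 3 1 0 2 = (1 : ℝ) := by
  rw [eps_cast, show epsZ 3 1 0 2 = 1 from by decide]; norm_num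

lemma epsv_3120 : eps 3 1 2 0 = (-1 : ℝ) := by
  rw [eps_cast, show epsZ 3 1 2 0 = -1 from by decide]; norm_num

lemma epsv_3201 : eps 3 2 0 1 = (-1 : ℝ) := by
  rw [eps_cast, show epsZ 3 2 0 1 = -1 from by decide]; norm_num

lemma epsv_3210 : eps 3 2 1 0 = (1 : ℝ) := by
  rw [eps_cast, show epsZ 3 2 1 0 = 1 from by decide]; norm_num

lemma eps_z12 : ∀ i k l : Fin 4, eps i i k l = 0 := by
  intro i k l; rw [eps_cast, show epsZ i i k l = 0 from by revert i k l; decide]; norm_num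

lemma eps_z13 : ∀ i j l : Fin 4, eps i j i l = 0 := by
  intro i j l; rw [eps_cast, show epsZ i j i l = 0 from by revert i j l; decide]; norm_num

lemma eps_z14 : ∀ i j k : Fin 4, eps i j k i = 0 := by
  intro i j k; rw [eps_cast, show epsZ i j k i = 0 from by revert i j k; decide]; norm_num

lemma eps_z23 : ∀ i j l : Fin 4, eps i j j l = 0 := by
  intro i j l; rw [eps_cast, show epsZ i j j l = 0 from by revert i j l; decide]; norm_num

lemma eps_z24 : ∀ i j k : Fin 4, eps i j k j = 0 := by
  intro i j k; rw [eps_cast, show epsZ i j k j = 0 from by revert i j k; decide]; norm_num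

lemma eps_z34 : ∀ i j k : Fin 4, eps i j k k = 0 := by
  intro i j k; rw [eps_cast, show epsZ i j k k = 0 from by revert i j k; decide]; norm_num

lemma epsZ_swap12 : ∀ i j k l : Fin 4, epsZ i j k l = -epsZ j i k l := by decide
lemma eps_swap12 (i j k l : Fin 4) : eps i j k l = -eps j i k l := by
  rw [eps_cast, eps_cast, epsZ_swap12 i j k l]; push_cast; ring

lemma epsZ_swap23 : ∀ i j k l : Fin 4, epsZ i j k l = -epsZ i k j l := by decide
lemma eps_swap23 (i j k l : Fin 4) : eps i j k l = -eps i k j l := by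
  rw [eps_cast, eps_cast, epsZ_swap23 i j k l]; push_cast; ring

lemma epsZ_swap34 : ∀ i j k l : Fin 4, epsZ i j k l = -epsZ i j l k := by decide
lemma eps_swap34 (i j k l : Fin 4) : eps i j k l = -eps i j l k := by
  rw [eps_cast, eps_cast, epsZ_swap34 i j k l]; push_cast; ring

lemma epsZ_swap24 : ∀ i j k l : Fin 4, epsZ i j k l = -epsZ i l k j := by decide
lemma eps_swap24 (i j k l : Fin 4) : eps i j k l = -eps i l k j := by
  rw [eps_cast, eps_cast, epsZ_swap24 i j k l]; push_cast; ring

lemma rep0 (f : Fin 4 → Fin 4 → Fin 4 → Fin 4 → ℝ)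
    (s12 : ∀ i j k l, f i j k l = -f j i k l)
    (s23 : ∀ i j k l, f i j k l = -f i k j l)
    (s34 : ∀ i j k l, f i j k l = -f i j l k) :
    ∀ i j k l, f i j k l = eps i j k l * f 0 1 2 3 := by
  have z12 : ∀ i k l, f i i k l = 0 := fun i k l => by have := s12 i i k l; linarith
  have z23 : ∀ i j l, f i j j l = 0 := fun i j l => by have := s23 i j j l; linarith
  have z34 : ∀ i j k, f i j k k = 0 := fun i j k => by have := s34 i j k k; linarith
  intro i j k l
  fin_cases i <;> fin_cases j <;> fin_cases k <;> fin_cases l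
  · show f 0 0 0 0 = eps 0 0 0 0 * f 0 1 2 3
    rw [eps_z12 0 0 0, z12 0 0 0]; ring
  · show f 0 0 0 1 = eps 0 0 0 1 * f 0 1 2 3
    rw [eps_z12 0 0 1, z12 0 0 1]; ring
  · show f 0 0 0 2 = eps 0 0 0 2 * f 0 1 2 3
    rw [eps_z12 0 0 2, z12 0 0 2]; ring
  · show f 0 0 0 3 = eps 0 0 0 3 * f 0 1 2 3
    rw [eps_z12 0 0 3, z12 0 0 3]; ring
  · show f 0 0 1 0 = eps 0 0 1 0 * f 0 1 2 3
    rw [eps_z12 0 1 0, s34 0 0 1 0, z12 0 0 1]; ring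
  · show f 0 0 1 1 = eps 0 0 1 1 * f 0 1 2 3
    rw [eps_z12 0 1 1, z12 0 1 1]; ring
  · show f 0 0 1 2 = eps 0 0 1 2 * f 0 1 2 3
    rw [eps_z12 0 1 2, z12 0 1 2]; ring
  · show f 0 0 1 3 = eps 0 0 1 3 * f 0 1 2 3
    rw [eps_z12 0 1 3, z12 0 1 3]; ring
  · show f 0 0 2 0 = eps 0 0 2 0 * f 0 1 2 3
    rw [eps_z12 0 2 0, s34 0 0 2 0, z12 0 0 2]; ring
  · show f 0 0 2 1 = eps 0 0 2 1 * f 0 1 2 3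
    rw [eps_z12 0 2 1, s34 0 0 2 1, z12 0 1 2]; ring
  · show f 0 0 2 2 = eps 0 0 2 2 * f 0 1 2 3
    rw [eps_z12 0 2 2, z12 0 2 2]; ring
  · show f 0 0 2 3 = eps 0 0 2 3 * f 0 1 2 3
    rw [eps_z12 0 2 3, z12 0 2 3]; ring
  · show f 0 0 3 0 = eps 0 0 3 0 * f 0 1 2 3
    rw [eps_z12 0 3 0, s34 0 0 3 0, z12 0 0 3]; ring
  · show f 0 0 3 1 = eps 0 0 3 1 * f 0 1 2 3
    rw [eps_z12 0 3 1, s34 0 0 3 1, z12 0 1 3]; ring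
  · show f 0 0 3 2 = eps 0 0 3 2 * f 0 1 2 3
    rw [eps_z12 0 3 2, s34 0 0 3 2, z12 0 2 3]; ring
  · show f 0 0 3 3 = eps 0 0 3 3 * f 0 1 2 3
    rw [eps_z12 0 3 3, z12 0 3 3]; ring
  · show f 0 1 0 0 = eps 0 1 0 0 * f 0 1 2 3
    rw [eps_z13 0 1 0, s23 0 1 0 0, s34 0 0 1 0, z12 0 0 1]; ring
  · show f 0 1 0 1 = eps 0 1 0 1 * f 0 1 2 3
    rw [eps_z13 0 1 1, s23 0 1 0 1, z12 0 1 1]; ring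
  · show f 0 1 0 2 = eps 0 1 0 2 * f 0 1 2 3
    rw [eps_z13 0 1 2, s23 0 1 0 2, z12 0 1 2]; ring
  · show f 0 1 0 3 = eps 0 1 0 3 * f 0 1 2 3
    rw [eps_z13 0 1 3, s23 0 1 0 3, z12 0 1 3]; ring
  · show f 0 1 1 0 = eps 0 1 1 0 * f 0 1 2 3
    rw [eps_z14 0 1 1, s34 0 1 1 0, s23 0 1 0 1, z12 0 1 1]; ring
  · show f 0 1 1 1 = eps 0 1 1 1 * f 0 1 2 3
    rw [eps_z23 0 1 1, z23 0 1 1]; ring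
  · show f 0 1 1 2 = eps 0 1 1 2 * f 0 1 2 3
    rw [eps_z23 0 1 2, z23 0 1 2]; ring
  · show f 0 1 1 3 = eps 0 1 1 3 * f 0 1 2 3
    rw [eps_z23 0 1 3, z23 0 1 3]; ring
  · show f 0 1 2 0 = eps 0 1 2 0 * f 0 1 2 3
    rw [eps_z14 0 1 2, s34 0 1 2 0, s23 0 1 0 2, z12 0 1 2]; ring
  · show f 0 1 2 1 = eps 0 1 2 1 * f 0 1 2 3
    rw [eps_z24 0 1 2, s34 0 1 2 1, z23 0 1 2]; ring
  · show f 0 1 2 2 = eps 0 1 2 2 * f 0 1 2 3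
    rw [eps_z34 0 1 2, z34 0 1 2]; ring
  · show f 0 1 2 3 = eps 0 1 2 3 * f 0 1 2 3
    rw [epsv_0123]; ring
  · show f 0 1 3 0 = eps 0 1 3 0 * f 0 1 2 3
    rw [eps_z14 0 1 3, s34 0 1 3 0, s23 0 1 0 3, z12 0 1 3]; ring
  · show f 0 1 3 1 = eps 0 1 3 1 * f 0 1 2 3
    rw [eps_z24 0 1 3, s34 0 1 3 1, z23 0 1 3]; ring
  · show f 0 1 3 2 = eps 0 1 3 2 * f 0 1 2 3
    rw [epsv_0132, s34 0 1 3 2]; ring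
  · show f 0 1 3 3 = eps 0 1 3 3 * f 0 1 2 3
    rw [eps_z34 0 1 3, z34 0 1 3]; ring
  · show f 0 2 0 0 = eps 0 2 0 0 * f 0 1 2 3
    rw [eps_z13 0 2 0, s23 0 2 0 0, s34 0 0 2 0, z12 0 0 2]; ring
  · show f 0 2 0 1 = eps 0 2 0 1 * f 0 1 2 3
    rw [eps_z13 0 2 1, s23 0 2 0 1, s34 0 0 2 1, z12 0 1 2]; ring
  · show f 0 2 0 2 = eps 0 2 0 2 * f 0 1 2 3
    rw [eps_z13 0 2 2, s23 0 2 0 2, z12 0 2 2]; ring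
  · show f 0 2 0 3 = eps 0 2 0 3 * f 0 1 2 3
    rw [eps_z13 0 2 3, s23 0 2 0 3, z12 0 2 3]; ring
  · show f 0 2 1 0 = eps 0 2 1 0 * f 0 1 2 3
    rw [eps_z14 0 2 1, s23 0 2 1 0, s34 0 1 2 0, s23 0 1 0 2, z12 0 1 2]; ring
  · show f 0 2 1 1 = eps 0 2 1 1 * f 0 1 2 3
    rw [eps_z34 0 2 1, s23 0 2 1 1, s34 0 1 2 1, z23 0 1 2]; ring
  · show f 0 2 1 2 = eps 0 2 1 2 * f 0 1 2 3
    rw [eps_z24 0 2 1, s23 0 2 1 2, z34 0 1 2]; ring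
  · show f 0 2 1 3 = eps 0 2 1 3 * f 0 1 2 3
    rw [epsv_0213, s23 0 2 1 3]; ring
  · show f 0 2 2 0 = eps 0 2 2 0 * f 0 1 2 3
    rw [eps_z14 0 2 2, s34 0 2 2 0, s23 0 2 0 2, z12 0 2 2]; ring
  · show f 0 2 2 1 = eps 0 2 2 1 * f 0 1 2 3
    rw [eps_z23 0 2 1, s34 0 2 2 1, s23 0 2 1 2, z34 0 1 2]; ring
  · show f 0 2 2 2 = eps 0 2 2 2 * f 0 1 2 3
    rw [eps_z23 0 2 2, z23 0 2 2]; ring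
  · show f 0 2 2 3 = eps 0 2 2 3 * f 0 1 2 3
    rw [eps_z23 0 2 3, z23 0 2 3]; ring
  · show f 0 2 3 0 = eps 0 2 3 0 * f 0 1 2 3
    rw [eps_z14 0 2 3, s34 0 2 3 0, s23 0 2 0 3, z12 0 2 3]; ring
  · show f 0 2 3 1 = eps 0 2 3 1 * f 0 1 2 3
    rw [epsv_0231, s34 0 2 3 1, s23 0 2 1 3]; ring
  · show f 0 2 3 2 = eps 0 2 3 2 * f 0 1 2 3
    rw [eps_z24 0 2 3, s34 0 2 3 2, z23 0 2 3]; ring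
  · show f 0 2 3 3 = eps 0 2 3 3 * f 0 1 2 3
    rw [eps_z34 0 2 3, z34 0 2 3]; ring
  · show f 0 3 0 0 = eps 0 3 0 0 * f 0 1 2 3
    rw [eps_z13 0 3 0, s23 0 3 0 0, s34 0 0 3 0, z12 0 0 3]; ring
  · show f 0 3 0 1 = eps 0 3 0 1 * f 0 1 2 3
    rw [eps_z13 0 3 1, s23 0 3 0 1, s34 0 0 3 1, z12 0 1 3]; ring
  · show f 0 3 0 2 = eps 0 3 0 2 * f 0 1 2 3
    rw [eps_z13 0 3 2, s23 0 3 0 2, s34 0 0 3 2, z12 0 2 3]; ring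
  · show f 0 3 0 3 = eps 0 3 0 3 * f 0 1 2 3
    rw [eps_z13 0 3 3, s23 0 3 0 3, z12 0 3 3]; ring
  · show f 0 3 1 0 = eps 0 3 1 0 * f 0 1 2 3
    rw [eps_z14 0 3 1, s23 0 3 1 0, s34 0 1 3 0, s23 0 1 0 3, z12 0 1 3]; ring
  · show f 0 3 1 1 = eps 0 3 1 1 * f 0 1 2 3
    rw [eps_z34 0 3 1, s23 0 3 1 1, s34 0 1 3 1, z23 0 1 3]; ring
  · show f 0 3 1 2 = eps 0 3 1 2 * f 0 1 2 3
    rw [epsv_0312, s23 0 3 1 2, s34 0 1 3 2]; ring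
  · show f 0 3 1 3 = eps 0 3 1 3 * f 0 1 2 3
    rw [eps_z24 0 3 1, s23 0 3 1 3, z34 0 1 3]; ring
  · show f 0 3 2 0 = eps 0 3 2 0 * f 0 1 2 3
    rw [eps_z14 0 3 2, s23 0 3 2 0, s34 0 2 3 0, s23 0 2 0 3, z12 0 2 3]; ring
  · show f 0 3 2 1 = eps 0 3 2 1 * f 0 1 2 3
    rw [epsv_0321, s23 0 3 2 1, s34 0 2 3 1, s23 0 2 1 3]; ring
  · show f 0 3 2 2 = eps 0 3 2 2 * f 0 1 2 3
    rw [eps_z34 0 3 2, s23 0 3 2 2, s34 0 2 3 2, z23 0 2 3]; ring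
  · show f 0 3 2 3 = eps 0 3 2 3 * f 0 1 2 3
    rw [eps_z24 0 3 2, s23 0 3 2 3, z34 0 2 3]; ring
  · show f 0 3 3 0 = eps 0 3 3 0 * f 0 1 2 3
    rw [eps_z14 0 3 3, s34 0 3 3 0, s23 0 3 0 3, z12 0 3 3]; ring
  · show f 0 3 3 1 = eps 0 3 3 1 * f 0 1 2 3
    rw [eps_z23 0 3 1, s34 0 3 3 1, s23 0 3 1 3, z34 0 1 3]; ring
  · show f 0 3 3 2 = eps 0 3 3 2 * f 0 1 2 3
    rw [eps_z23 0 3 2, s34 0 3 3 2, s23 0 3 2 3, z34 0 2 3]; ring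
  · show f 0 3 3 3 = eps 0 3 3 3 * f 0 1 2 3
    rw [eps_z23 0 3 3, z23 0 3 3]; ring
  · show f 1 0 0 0 = eps 1 0 0 0 * f 0 1 2 3
    rw [eps_z23 1 0 0, s12 1 0 0 0, s23 0 1 0 0, s34 0 0 1 0, z12 0 0 1]; ring
  · show f 1 0 0 1 = eps 1 0 0 1 * f 0 1 2 3
    rw [eps_z14 1 0 0, s12 1 0 0 1, s23 0 1 0 1, z12 0 1 1]; ring
  · show f 1 0 0 2 = eps 1 0 0 2 * f 0 1 2 3
    rw [eps_z23 1 0 2, s12 1 0 0 2, s23 0 1 0 2, z12 0 1 2]; ring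
  · show f 1 0 0 3 = eps 1 0 0 3 * f 0 1 2 3
    rw [eps_z23 1 0 3, s12 1 0 0 3, s23 0 1 0 3, z12 0 1 3]; ring
  · show f 1 0 1 0 = eps 1 0 1 0 * f 0 1 2 3
    rw [eps_z13 1 0 0, s12 1 0 1 0, s34 0 1 1 0, s23 0 1 0 1, z12 0 1 1]; ring
  · show f 1 0 1 1 = eps 1 0 1 1 * f 0 1 2 3
    rw [eps_z13 1 0 1, s12 1 0 1 1, z23 0 1 1]; ring
  · show f 1 0 1 2 = eps 1 0 1 2 * f 0 1 2 3
    rw [eps_z13 1 0 2, s12 1 0 1 2, z23 0 1 2]; ring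
  · show f 1 0 1 3 = eps 1 0 1 3 * f 0 1 2 3
    rw [eps_z13 1 0 3, s12 1 0 1 3, z23 0 1 3]; ring
  · show f 1 0 2 0 = eps 1 0 2 0 * f 0 1 2 3
    rw [eps_z24 1 0 2, s12 1 0 2 0, s34 0 1 2 0, s23 0 1 0 2, z12 0 1 2]; ring
  · show f 1 0 2 1 = eps 1 0 2 1 * f 0 1 2 3
    rw [eps_z14 1 0 2, s12 1 0 2 1, s34 0 1 2 1, z23 0 1 2]; ring
  · show f 1 0 2 2 = eps 1 0 2 2 * f 0 1 2 3
    rw [eps_z34 1 0 2, s12 1 0 2 2, z34 0 1 2]; ring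
  · show f 1 0 2 3 = eps 1 0 2 3 * f 0 1 2 3
    rw [epsv_1023, s12 1 0 2 3]; ring
  · show f 1 0 3 0 = eps 1 0 3 0 * f 0 1 2 3
    rw [eps_z24 1 0 3, s12 1 0 3 0, s34 0 1 3 0, s23 0 1 0 3, z12 0 1 3]; ring
  · show f 1 0 3 1 = eps 1 0 3 1 * f 0 1 2 3
    rw [eps_z14 1 0 3, s12 1 0 3 1, s34 0 1 3 1, z23 0 1 3]; ring
  · show f 1 0 3 2 = eps 1 0 3 2 * f 0 1 2 3
    rw [epsv_1032, s12 1 0 3 2, s34 0 1 3 2]; ring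
  · show f 1 0 3 3 = eps 1 0 3 3 * f 0 1 2 3
    rw [eps_z34 1 0 3, s12 1 0 3 3, z34 0 1 3]; ring
  · show f 1 1 0 0 = eps 1 1 0 0 * f 0 1 2 3
    rw [eps_z12 1 0 0, s23 1 1 0 0, s12 1 0 1 0, s34 0 1 1 0, s23 0 1 0 1, z12 0 1 1]; ring
  · show f 1 1 0 1 = eps 1 1 0 1 * f 0 1 2 3
    rw [eps_z12 1 0 1, s23 1 1 0 1, s12 1 0 1 1, z23 0 1 1]; ring
  · show f 1 1 0 2 = eps 1 1 0 2 * f 0 1 2 3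
    rw [eps_z12 1 0 2, s23 1 1 0 2, s12 1 0 1 2, z23 0 1 2]; ring
  · show f 1 1 0 3 = eps 1 1 0 3 * f 0 1 2 3
    rw [eps_z12 1 0 3, s23 1 1 0 3, s12 1 0 1 3, z23 0 1 3]; ring
  · show f 1 1 1 0 = eps 1 1 1 0 * f 0 1 2 3
    rw [eps_z12 1 1 0, s34 1 1 1 0, s23 1 1 0 1, s12 1 0 1 1, z23 0 1 1]; ring
  · show f 1 1 1 1 = eps 1 1 1 1 * f 0 1 2 3
    rw [eps_z12 1 1 1, z12 1 1 1]; ring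
  · show f 1 1 1 2 = eps 1 1 1 2 * f 0 1 2 3
    rw [eps_z12 1 1 2, z12 1 1 2]; ring
  · show f 1 1 1 3 = eps 1 1 1 3 * f 0 1 2 3
    rw [eps_z12 1 1 3, z12 1 1 3]; ring
  · show f 1 1 2 0 = eps 1 1 2 0 * f 0 1 2 3
    rw [eps_z12 1 2 0, s34 1 1 2 0, s23 1 1 0 2, s12 1 0 1 2, z23 0 1 2]; ring
  · show f 1 1 2 1 = eps 1 1 2 1 * f 0 1 2 3
    rw [eps_z12 1 2 1, s34 1 1 2 1, z12 1 1 2]; ring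
  · show f 1 1 2 2 = eps 1 1 2 2 * f 0 1 2 3
    rw [eps_z12 1 2 2, z12 1 2 2]; ring
  · show f 1 1 2 3 = eps 1 1 2 3 * f 0 1 2 3
    rw [eps_z12 1 2 3, z12 1 2 3]; ring
  · show f 1 1 3 0 = eps 1 1 3 0 * f 0 1 2 3
    rw [eps_z12 1 3 0, s34 1 1 3 0, s23 1 1 0 3, s12 1 0 1 3, z23 0 1 3]; ring
  · show f 1 1 3 1 = eps 1 1 3 1 * f 0 1 2 3
    rw [eps_z12 1 3 1, s34 1 1 3 1, z12 1 1 3]; ring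
  · show f 1 1 3 2 = eps 1 1 3 2 * f 0 1 2 3
    rw [eps_z12 1 3 2, s34 1 1 3 2, z12 1 2 3]; ring
  · show f 1 1 3 3 = eps 1 1 3 3 * f 0 1 2 3
    rw [eps_z12 1 3 3, z12 1 3 3]; ring
  · show f 1 2 0 0 = eps 1 2 0 0 * f 0 1 2 3
    rw [eps_z34 1 2 0, s23 1 2 0 0, s12 1 0 2 0, s34 0 1 2 0, s23 0 1 0 2, z12 0 1 2]; ring
  · show f 1 2 0 1 = eps 1 2 0 1 * f 0 1 2 3
    rw [eps_z14 1 2 0, s23 1 2 0 1, s12 1 0 2 1, s34 0 1 2 1, z23 0 1 2]; ring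
  · show f 1 2 0 2 = eps 1 2 0 2 * f 0 1 2 3
    rw [eps_z24 1 2 0, s23 1 2 0 2, s12 1 0 2 2, z34 0 1 2]; ring
  · show f 1 2 0 3 = eps 1 2 0 3 * f 0 1 2 3
    rw [epsv_1203, s23 1 2 0 3, s12 1 0 2 3]; ring
  · show f 1 2 1 0 = eps 1 2 1 0 * f 0 1 2 3
    rw [eps_z13 1 2 0, s23 1 2 1 0, s34 1 1 2 0, s23 1 1 0 2, s12 1 0 1 2, z23 0 1 2]; ring
  · show f 1 2 1 1 = eps 1 2 1 1 * f 0 1 2 3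
    rw [eps_z13 1 2 1, s23 1 2 1 1, s34 1 1 2 1, z12 1 1 2]; ring
  · show f 1 2 1 2 = eps 1 2 1 2 * f 0 1 2 3
    rw [eps_z13 1 2 2, s23 1 2 1 2, z12 1 2 2]; ring
  · show f 1 2 1 3 = eps 1 2 1 3 * f 0 1 2 3
    rw [eps_z13 1 2 3, s23 1 2 1 3, z12 1 2 3]; ring
  · show f 1 2 2 0 = eps 1 2 2 0 * f 0 1 2 3
    rw [eps_z23 1 2 0, s34 1 2 2 0, s23 1 2 0 2, s12 1 0 2 2, z34 0 1 2]; ring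
  · show f 1 2 2 1 = eps 1 2 2 1 * f 0 1 2 3
    rw [eps_z14 1 2 2, s34 1 2 2 1, s23 1 2 1 2, z12 1 2 2]; ring
  · show f 1 2 2 2 = eps 1 2 2 2 * f 0 1 2 3
    rw [eps_z23 1 2 2, z23 1 2 2]; ring
  · show f 1 2 2 3 = eps 1 2 2 3 * f 0 1 2 3
    rw [eps_z23 1 2 3, z23 1 2 3]; ring
  · show f 1 2 3 0 = eps 1 2 3 0 * f 0 1 2 3
    rw [epsv_1230, s34 1 2 3 0, s23 1 2 0 3, s12 1 0 2 3]; ring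
  · show f 1 2 3 1 = eps 1 2 3 1 * f 0 1 2 3
    rw [eps_z14 1 2 3, s34 1 2 3 1, s23 1 2 1 3, z12 1 2 3]; ring
  · show f 1 2 3 2 = eps 1 2 3 2 * f 0 1 2 3
    rw [eps_z24 1 2 3, s34 1 2 3 2, z23 1 2 3]; ring
  · show f 1 2 3 3 = eps 1 2 3 3 * f 0 1 2 3
    rw [eps_z34 1 2 3, z34 1 2 3]; ring
  · show f 1 3 0 0 = eps 1 3 0 0 * f 0 1 2 3
    rw [eps_z34 1 3 0, s23 1 3 0 0, s12 1 0 3 0, s34 0 1 3 0, s23 0 1 0 3, z12 0 1 3]; ring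
  · show f 1 3 0 1 = eps 1 3 0 1 * f 0 1 2 3
    rw [eps_z14 1 3 0, s23 1 3 0 1, s12 1 0 3 1, s34 0 1 3 1, z23 0 1 3]; ring
  · show f 1 3 0 2 = eps 1 3 0 2 * f 0 1 2 3
    rw [epsv_1302, s23 1 3 0 2, s12 1 0 3 2, s34 0 1 3 2]; ring
  · show f 1 3 0 3 = eps 1 3 0 3 * f 0 1 2 3
    rw [eps_z24 1 3 0, s23 1 3 0 3, s12 1 0 3 3, z34 0 1 3]; ring
  · show f 1 3 1 0 = eps 1 3 1 0 * f 0 1 2 3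
    rw [eps_z13 1 3 0, s23 1 3 1 0, s34 1 1 3 0, s23 1 1 0 3, s12 1 0 1 3, z23 0 1 3]; ring
  · show f 1 3 1 1 = eps 1 3 1 1 * f 0 1 2 3
    rw [eps_z13 1 3 1, s23 1 3 1 1, s34 1 1 3 1, z12 1 1 3]; ring
  · show f 1 3 1 2 = eps 1 3 1 2 * f 0 1 2 3
    rw [eps_z13 1 3 2, s23 1 3 1 2, s34 1 1 3 2, z12 1 2 3]; ring
  · show f 1 3 1 3 = eps 1 3 1 3 * f 0 1 2 3
    rw [eps_z13 1 3 3, s23 1 3 1 3, z12 1 3 3]; ring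
  · show f 1 3 2 0 = eps 1 3 2 0 * f 0 1 2 3
    rw [epsv_1320, s23 1 3 2 0, s34 1 2 3 0, s23 1 2 0 3, s12 1 0 2 3]; ring
  · show f 1 3 2 1 = eps 1 3 2 1 * f 0 1 2 3
    rw [eps_z14 1 3 2, s23 1 3 2 1, s34 1 2 3 1, s23 1 2 1 3, z12 1 2 3]; ring
  · show f 1 3 2 2 = eps 1 3 2 2 * f 0 1 2 3
    rw [eps_z34 1 3 2, s23 1 3 2 2, s34 1 2 3 2, z23 1 2 3]; ring
  · show f 1 3 2 3 = eps 1 3 2 3 * f 0 1 2 3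
    rw [eps_z24 1 3 2, s23 1 3 2 3, z34 1 2 3]; ring
  · show f 1 3 3 0 = eps 1 3 3 0 * f 0 1 2 3
    rw [eps_z23 1 3 0, s34 1 3 3 0, s23 1 3 0 3, s12 1 0 3 3, z34 0 1 3]; ring
  · show f 1 3 3 1 = eps 1 3 3 1 * f 0 1 2 3
    rw [eps_z14 1 3 3, s34 1 3 3 1, s23 1 3 1 3, z12 1 3 3]; ring
  · show f 1 3 3 2 = eps 1 3 3 2 * f 0 1 2 3
    rw [eps_z23 1 3 2, s34 1 3 3 2, s23 1 3 2 3, z34 1 2 3]; ring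
  · show f 1 3 3 3 = eps 1 3 3 3 * f 0 1 2 3
    rw [eps_z23 1 3 3, z23 1 3 3]; ring
  · show f 2 0 0 0 = eps 2 0 0 0 * f 0 1 2 3
    rw [eps_z23 2 0 0, s12 2 0 0 0, s23 0 2 0 0, s34 0 0 2 0, z12 0 0 2]; ring
  · show f 2 0 0 1 = eps 2 0 0 1 * f 0 1 2 3
    rw [eps_z23 2 0 1, s12 2 0 0 1, s23 0 2 0 1, s34 0 0 2 1, z12 0 1 2]; ring
  · show f 2 0 0 2 = eps 2 0 0 2 * f 0 1 2 3
    rw [eps_z14 2 0 0, s12 2 0 0 2, s23 0 2 0 2, z12 0 2 2]; ring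
  · show f 2 0 0 3 = eps 2 0 0 3 * f 0 1 2 3
    rw [eps_z23 2 0 3, s12 2 0 0 3, s23 0 2 0 3, z12 0 2 3]; ring
  · show f 2 0 1 0 = eps 2 0 1 0 * f 0 1 2 3
    rw [eps_z24 2 0 1, s12 2 0 1 0, s23 0 2 1 0, s34 0 1 2 0, s23 0 1 0 2, z12 0 1 2]; ring
  · show f 2 0 1 1 = eps 2 0 1 1 * f 0 1 2 3
    rw [eps_z34 2 0 1, s12 2 0 1 1, s23 0 2 1 1, s34 0 1 2 1, z23 0 1 2]; ring
  · show f 2 0 1 2 = eps 2 0 1 2 * f 0 1 2 3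
    rw [eps_z14 2 0 1, s12 2 0 1 2, s23 0 2 1 2, z34 0 1 2]; ring
  · show f 2 0 1 3 = eps 2 0 1 3 * f 0 1 2 3
    rw [epsv_2013, s12 2 0 1 3, s23 0 2 1 3]; ring
  · show f 2 0 2 0 = eps 2 0 2 0 * f 0 1 2 3
    rw [eps_z13 2 0 0, s12 2 0 2 0, s34 0 2 2 0, s23 0 2 0 2, z12 0 2 2]; ring
  · show f 2 0 2 1 = eps 2 0 2 1 * f 0 1 2 3
    rw [eps_z13 2 0 1, s12 2 0 2 1, s34 0 2 2 1, s23 0 2 1 2, z34 0 1 2]; ring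
  · show f 2 0 2 2 = eps 2 0 2 2 * f 0 1 2 3
    rw [eps_z13 2 0 2, s12 2 0 2 2, z23 0 2 2]; ring
  · show f 2 0 2 3 = eps 2 0 2 3 * f 0 1 2 3
    rw [eps_z13 2 0 3, s12 2 0 2 3, z23 0 2 3]; ring
  · show f 2 0 3 0 = eps 2 0 3 0 * f 0 1 2 3
    rw [eps_z24 2 0 3, s12 2 0 3 0, s34 0 2 3 0, s23 0 2 0 3, z12 0 2 3]; ring
  · show f 2 0 3 1 = eps 2 0 3 1 * f 0 1 2 3
    rw [epsv_2031, s12 2 0 3 1, s34 0 2 3 1, s23 0 2 1 3]; ring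
  · show f 2 0 3 2 = eps 2 0 3 2 * f 0 1 2 3
    rw [eps_z14 2 0 3, s12 2 0 3 2, s34 0 2 3 2, z23 0 2 3]; ring
  · show f 2 0 3 3 = eps 2 0 3 3 * f 0 1 2 3
    rw [eps_z34 2 0 3, s12 2 0 3 3, z34 0 2 3]; ring
  · show f 2 1 0 0 = eps 2 1 0 0 * f 0 1 2 3
    rw [eps_z34 2 1 0, s12 2 1 0 0, s23 1 2 0 0, s12 1 0 2 0, s34 0 1 2 0, s23 0 1 0 2, z12 0 1 2]; ring
  · show f 2 1 0 1 = eps 2 1 0 1 * f 0 1 2 3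
    rw [eps_z24 2 1 0, s12 2 1 0 1, s23 1 2 0 1, s12 1 0 2 1, s34 0 1 2 1, z23 0 1 2]; ring
  · show f 2 1 0 2 = eps 2 1 0 2 * f 0 1 2 3
    rw [eps_z14 2 1 0, s12 2 1 0 2, s23 1 2 0 2, s12 1 0 2 2, z34 0 1 2]; ring
  · show f 2 1 0 3 = eps 2 1 0 3 * f 0 1 2 3
    rw [epsv_2103, s12 2 1 0 3, s23 1 2 0 3, s12 1 0 2 3]; ring
  · show f 2 1 1 0 = eps 2 1 1 0 * f 0 1 2 3
    rw [eps_z23 2 1 0, s12 2 1 1 0, s23 1 2 1 0, s34 1 1 2 0, s23 1 1 0 2, s12 1 0 1 2, z23 0 1 2]; ring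
  · show f 2 1 1 1 = eps 2 1 1 1 * f 0 1 2 3
    rw [eps_z23 2 1 1, s12 2 1 1 1, s23 1 2 1 1, s34 1 1 2 1, z12 1 1 2]; ring
  · show f 2 1 1 2 = eps 2 1 1 2 * f 0 1 2 3
    rw [eps_z14 2 1 1, s12 2 1 1 2, s23 1 2 1 2, z12 1 2 2]; ring
  · show f 2 1 1 3 = eps 2 1 1 3 * f 0 1 2 3
    rw [eps_z23 2 1 3, s12 2 1 1 3, s23 1 2 1 3, z12 1 2 3]; ring
  · show f 2 1 2 0 = eps 2 1 2 0 * f 0 1 2 3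
    rw [eps_z13 2 1 0, s12 2 1 2 0, s34 1 2 2 0, s23 1 2 0 2, s12 1 0 2 2, z34 0 1 2]; ring
  · show f 2 1 2 1 = eps 2 1 2 1 * f 0 1 2 3
    rw [eps_z13 2 1 1, s12 2 1 2 1, s34 1 2 2 1, s23 1 2 1 2, z12 1 2 2]; ring
  · show f 2 1 2 2 = eps 2 1 2 2 * f 0 1 2 3
    rw [eps_z13 2 1 2, s12 2 1 2 2, z23 1 2 2]; ring
  · show f 2 1 2 3 = eps 2 1 2 3 * f 0 1 2 3
    rw [eps_z13 2 1 3, s12 2 1 2 3, z23 1 2 3]; ring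
  · show f 2 1 3 0 = eps 2 1 3 0 * f 0 1 2 3
    rw [epsv_2130, s12 2 1 3 0, s34 1 2 3 0, s23 1 2 0 3, s12 1 0 2 3]; ring
  · show f 2 1 3 1 = eps 2 1 3 1 * f 0 1 2 3
    rw [eps_z24 2 1 3, s12 2 1 3 1, s34 1 2 3 1, s23 1 2 1 3, z12 1 2 3]; ring
  · show f 2 1 3 2 = eps 2 1 3 2 * f 0 1 2 3
    rw [eps_z14 2 1 3, s12 2 1 3 2, s34 1 2 3 2, z23 1 2 3]; ring
  · show f 2 1 3 3 = eps 2 1 3 3 * f 0 1 2 3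
    rw [eps_z34 2 1 3, s12 2 1 3 3, z34 1 2 3]; ring
  · show f 2 2 0 0 = eps 2 2 0 0 * f 0 1 2 3
    rw [eps_z12 2 0 0, s23 2 2 0 0, s12 2 0 2 0, s34 0 2 2 0, s23 0 2 0 2, z12 0 2 2]; ring
  · show f 2 2 0 1 = eps 2 2 0 1 * f 0 1 2 3
    rw [eps_z12 2 0 1, s23 2 2 0 1, s12 2 0 2 1, s34 0 2 2 1, s23 0 2 1 2, z34 0 1 2]; ring
  · show f 2 2 0 2 = eps 2 2 0 2 * f 0 1 2 3
    rw [eps_z12 2 0 2, s23 2 2 0 2, s12 2 0 2 2, z23 0 2 2]; ring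
  · show f 2 2 0 3 = eps 2 2 0 3 * f 0 1 2 3
    rw [eps_z12 2 0 3, s23 2 2 0 3, s12 2 0 2 3, z23 0 2 3]; ring
  · show f 2 2 1 0 = eps 2 2 1 0 * f 0 1 2 3
    rw [eps_z12 2 1 0, s23 2 2 1 0, s12 2 1 2 0, s34 1 2 2 0, s23 1 2 0 2, s12 1 0 2 2, z34 0 1 2]; ring
  · show f 2 2 1 1 = eps 2 2 1 1 * f 0 1 2 3
    rw [eps_z12 2 1 1, s23 2 2 1 1, s12 2 1 2 1, s34 1 2 2 1, s23 1 2 1 2, z12 1 2 2]; ring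
  · show f 2 2 1 2 = eps 2 2 1 2 * f 0 1 2 3
    rw [eps_z12 2 1 2, s23 2 2 1 2, s12 2 1 2 2, z23 1 2 2]; ring
  · show f 2 2 1 3 = eps 2 2 1 3 * f 0 1 2 3
    rw [eps_z12 2 1 3, s23 2 2 1 3, s12 2 1 2 3, z23 1 2 3]; ring
  · show f 2 2 2 0 = eps 2 2 2 0 * f 0 1 2 3
    rw [eps_z12 2 2 0, s34 2 2 2 0, s23 2 2 0 2, s12 2 0 2 2, z23 0 2 2]; ring
  · show f 2 2 2 1 = eps 2 2 2 1 * f 0 1 2 3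
    rw [eps_z12 2 2 1, s34 2 2 2 1, s23 2 2 1 2, s12 2 1 2 2, z23 1 2 2]; ring
  · show f 2 2 2 2 = eps 2 2 2 2 * f 0 1 2 3
    rw [eps_z12 2 2 2, z12 2 2 2]; ring
  · show f 2 2 2 3 = eps 2 2 2 3 * f 0 1 2 3
    rw [eps_z12 2 2 3, z12 2 2 3]; ring
  · show f 2 2 3 0 = eps 2 2 3 0 * f 0 1 2 3
    rw [eps_z12 2 3 0, s34 2 2 3 0, s23 2 2 0 3, s12 2 0 2 3, z23 0 2 3]; ring
  · show f 2 2 3 1 = eps 2 2 3 1 * f 0 1 2 3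
    rw [eps_z12 2 3 1, s34 2 2 3 1, s23 2 2 1 3, s12 2 1 2 3, z23 1 2 3]; ring
  · show f 2 2 3 2 = eps 2 2 3 2 * f 0 1 2 3
    rw [eps_z12 2 3 2, s34 2 2 3 2, z12 2 2 3]; ring
  · show f 2 2 3 3 = eps 2 2 3 3 * f 0 1 2 3
    rw [eps_z12 2 3 3, z12 2 3 3]; ring
  · show f 2 3 0 0 = eps 2 3 0 0 * f 0 1 2 3
    rw [eps_z34 2 3 0, s23 2 3 0 0, s12 2 0 3 0, s34 0 2 3 0, s23 0 2 0 3, z12 0 2 3]; ring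
  · show f 2 3 0 1 = eps 2 3 0 1 * f 0 1 2 3
    rw [epsv_2301, s23 2 3 0 1, s12 2 0 3 1, s34 0 2 3 1, s23 0 2 1 3]; ring
  · show f 2 3 0 2 = eps 2 3 0 2 * f 0 1 2 3
    rw [eps_z14 2 3 0, s23 2 3 0 2, s12 2 0 3 2, s34 0 2 3 2, z23 0 2 3]; ring
  · show f 2 3 0 3 = eps 2 3 0 3 * f 0 1 2 3
    rw [eps_z24 2 3 0, s23 2 3 0 3, s12 2 0 3 3, z34 0 2 3]; ring
  · show f 2 3 1 0 = eps 2 3 1 0 * f 0 1 2 3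
    rw [epsv_2310, s23 2 3 1 0, s12 2 1 3 0, s34 1 2 3 0, s23 1 2 0 3, s12 1 0 2 3]; ring
  · show f 2 3 1 1 = eps 2 3 1 1 * f 0 1 2 3
    rw [eps_z34 2 3 1, s23 2 3 1 1, s12 2 1 3 1, s34 1 2 3 1, s23 1 2 1 3, z12 1 2 3]; ring
  · show f 2 3 1 2 = eps 2 3 1 2 * f 0 1 2 3
    rw [eps_z14 2 3 1, s23 2 3 1 2, s12 2 1 3 2, s34 1 2 3 2, z23 1 2 3]; ring
  · show f 2 3 1 3 = eps 2 3 1 3 * f 0 1 2 3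
    rw [eps_z24 2 3 1, s23 2 3 1 3, s12 2 1 3 3, z34 1 2 3]; ring
  · show f 2 3 2 0 = eps 2 3 2 0 * f 0 1 2 3
    rw [eps_z13 2 3 0, s23 2 3 2 0, s34 2 2 3 0, s23 2 2 0 3, s12 2 0 2 3, z23 0 2 3]; ring
  · show f 2 3 2 1 = eps 2 3 2 1 * f 0 1 2 3
    rw [eps_z13 2 3 1, s23 2 3 2 1, s34 2 2 3 1, s23 2 2 1 3, s12 2 1 2 3, z23 1 2 3]; ring
  · show f 2 3 2 2 = eps 2 3 2 2 * f 0 1 2 3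
    rw [eps_z13 2 3 2, s23 2 3 2 2, s34 2 2 3 2, z12 2 2 3]; ring
  · show f 2 3 2 3 = eps 2 3 2 3 * f 0 1 2 3
    rw [eps_z13 2 3 3, s23 2 3 2 3, z12 2 3 3]; ring
  · show f 2 3 3 0 = eps 2 3 3 0 * f 0 1 2 3
    rw [eps_z23 2 3 0, s34 2 3 3 0, s23 2 3 0 3, s12 2 0 3 3, z34 0 2 3]; ring
  · show f 2 3 3 1 = eps 2 3 3 1 * f 0 1 2 3
    rw [eps_z23 2 3 1, s34 2 3 3 1, s23 2 3 1 3, s12 2 1 3 3, z34 1 2 3]; ring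
  · show f 2 3 3 2 = eps 2 3 3 2 * f 0 1 2 3
    rw [eps_z14 2 3 3, s34 2 3 3 2, s23 2 3 2 3, z12 2 3 3]; ring
  · show f 2 3 3 3 = eps 2 3 3 3 * f 0 1 2 3
    rw [eps_z23 2 3 3, z23 2 3 3]; ring
  · show f 3 0 0 0 = eps 3 0 0 0 * f 0 1 2 3
    rw [eps_z23 3 0 0, s12 3 0 0 0, s23 0 3 0 0, s34 0 0 3 0, z12 0 0 3]; ring
  · show f 3 0 0 1 = eps 3 0 0 1 * f 0 1 2 3
    rw [eps_z23 3 0 1, s12 3 0 0 1, s23 0 3 0 1, s34 0 0 3 1, z12 0 1 3]; ring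
  · show f 3 0 0 2 = eps 3 0 0 2 * f 0 1 2 3
    rw [eps_z23 3 0 2, s12 3 0 0 2, s23 0 3 0 2, s34 0 0 3 2, z12 0 2 3]; ring
  · show f 3 0 0 3 = eps 3 0 0 3 * f 0 1 2 3
    rw [eps_z14 3 0 0, s12 3 0 0 3, s23 0 3 0 3, z12 0 3 3]; ring
  · show f 3 0 1 0 = eps 3 0 1 0 * f 0 1 2 3
    rw [eps_z24 3 0 1, s12 3 0 1 0, s23 0 3 1 0, s34 0 1 3 0, s23 0 1 0 3, z12 0 1 3]; ring
  · show f 3 0 1 1 = eps 3 0 1 1 * f 0 1 2 3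
    rw [eps_z34 3 0 1, s12 3 0 1 1, s23 0 3 1 1, s34 0 1 3 1, z23 0 1 3]; ring
  · show f 3 0 1 2 = eps 3 0 1 2 * f 0 1 2 3
    rw [epsv_3012, s12 3 0 1 2, s23 0 3 1 2, s34 0 1 3 2]; ring
  · show f 3 0 1 3 = eps 3 0 1 3 * f 0 1 2 3
    rw [eps_z14 3 0 1, s12 3 0 1 3, s23 0 3 1 3, z34 0 1 3]; ring
  · show f 3 0 2 0 = eps 3 0 2 0 * f 0 1 2 3
    rw [eps_z24 3 0 2, s12 3 0 2 0, s23 0 3 2 0, s34 0 2 3 0, s23 0 2 0 3, z12 0 2 3]; ring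
  · show f 3 0 2 1 = eps 3 0 2 1 * f 0 1 2 3
    rw [epsv_3021, s12 3 0 2 1, s23 0 3 2 1, s34 0 2 3 1, s23 0 2 1 3]; ring
  · show f 3 0 2 2 = eps 3 0 2 2 * f 0 1 2 3
    rw [eps_z34 3 0 2, s12 3 0 2 2, s23 0 3 2 2, s34 0 2 3 2, z23 0 2 3]; ring
  · show f 3 0 2 3 = eps 3 0 2 3 * f 0 1 2 3
    rw [eps_z14 3 0 2, s12 3 0 2 3, s23 0 3 2 3, z34 0 2 3]; ring
  · show f 3 0 3 0 = eps 3 0 3 0 * f 0 1 2 3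
    rw [eps_z13 3 0 0, s12 3 0 3 0, s34 0 3 3 0, s23 0 3 0 3, z12 0 3 3]; ring
  · show f 3 0 3 1 = eps 3 0 3 1 * f 0 1 2 3
    rw [eps_z13 3 0 1, s12 3 0 3 1, s34 0 3 3 1, s23 0 3 1 3, z34 0 1 3]; ring
  · show f 3 0 3 2 = eps 3 0 3 2 * f 0 1 2 3
    rw [eps_z13 3 0 2, s12 3 0 3 2, s34 0 3 3 2, s23 0 3 2 3, z34 0 2 3]; ring
  · show f 3 0 3 3 = eps 3 0 3 3 * f 0 1 2 3
    rw [eps_z13 3 0 3, s12 3 0 3 3, z23 0 3 3]; ring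
  · show f 3 1 0 0 = eps 3 1 0 0 * f 0 1 2 3
    rw [eps_z34 3 1 0, s12 3 1 0 0, s23 1 3 0 0, s12 1 0 3 0, s34 0 1 3 0, s23 0 1 0 3, z12 0 1 3]; ring
  · show f 3 1 0 1 = eps 3 1 0 1 * f 0 1 2 3
    rw [eps_z24 3 1 0, s12 3 1 0 1, s23 1 3 0 1, s12 1 0 3 1, s34 0 1 3 1, z23 0 1 3]; ring
  · show f 3 1 0 2 = eps 3 1 0 2 * f 0 1 2 3
    rw [epsv_3102, s12 3 1 0 2, s23 1 3 0 2, s12 1 0 3 2, s34 0 1 3 2]; ring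
  · show f 3 1 0 3 = eps 3 1 0 3 * f 0 1 2 3
    rw [eps_z14 3 1 0, s12 3 1 0 3, s23 1 3 0 3, s12 1 0 3 3, z34 0 1 3]; ring
  · show f 3 1 1 0 = eps 3 1 1 0 * f 0 1 2 3
    rw [eps_z23 3 1 0, s12 3 1 1 0, s23 1 3 1 0, s34 1 1 3 0, s23 1 1 0 3, s12 1 0 1 3, z23 0 1 3]; ring
  · show f 3 1 1 1 = eps 3 1 1 1 * f 0 1 2 3
    rw [eps_z23 3 1 1, s12 3 1 1 1, s23 1 3 1 1, s34 1 1 3 1, z12 1 1 3]; ring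
  · show f 3 1 1 2 = eps 3 1 1 2 * f 0 1 2 3
    rw [eps_z23 3 1 2, s12 3 1 1 2, s23 1 3 1 2, s34 1 1 3 2, z12 1 2 3]; ring
  · show f 3 1 1 3 = eps 3 1 1 3 * f 0 1 2 3
    rw [eps_z14 3 1 1, s12 3 1 1 3, s23 1 3 1 3, z12 1 3 3]; ring
  · show f 3 1 2 0 = eps 3 1 2 0 * f 0 1 2 3
    rw [epsv_3120, s12 3 1 2 0, s23 1 3 2 0, s34 1 2 3 0, s23 1 2 0 3, s12 1 0 2 3]; ring
  · show f 3 1 2 1 = eps 3 1 2 1 * f 0 1 2 3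
    rw [eps_z24 3 1 2, s12 3 1 2 1, s23 1 3 2 1, s34 1 2 3 1, s23 1 2 1 3, z12 1 2 3]; ring
  · show f 3 1 2 2 = eps 3 1 2 2 * f 0 1 2 3
    rw [eps_z34 3 1 2, s12 3 1 2 2, s23 1 3 2 2, s34 1 2 3 2, z23 1 2 3]; ring
  · show f 3 1 2 3 = eps 3 1 2 3 * f 0 1 2 3
    rw [eps_z14 3 1 2, s12 3 1 2 3, s23 1 3 2 3, z34 1 2 3]; ring
  · show f 3 1 3 0 = eps 3 1 3 0 * f 0 1 2 3
    rw [eps_z13 3 1 0, s12 3 1 3 0, s34 1 3 3 0, s23 1 3 0 3, s12 1 0 3 3, z34 0 1 3]; ring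
  · show f 3 1 3 1 = eps 3 1 3 1 * f 0 1 2 3
    rw [eps_z13 3 1 1, s12 3 1 3 1, s34 1 3 3 1, s23 1 3 1 3, z12 1 3 3]; ring
  · show f 3 1 3 2 = eps 3 1 3 2 * f 0 1 2 3
    rw [eps_z13 3 1 2, s12 3 1 3 2, s34 1 3 3 2, s23 1 3 2 3, z34 1 2 3]; ring
  · show f 3 1 3 3 = eps 3 1 3 3 * f 0 1 2 3
    rw [eps_z13 3 1 3, s12 3 1 3 3, z23 1 3 3]; ring
  · show f 3 2 0 0 = eps 3 2 0 0 * f 0 1 2 3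
    rw [eps_z34 3 2 0, s12 3 2 0 0, s23 2 3 0 0, s12 2 0 3 0, s34 0 2 3 0, s23 0 2 0 3, z12 0 2 3]; ring
  · show f 3 2 0 1 = eps 3 2 0 1 * f 0 1 2 3
    rw [epsv_3201, s12 3 2 0 1, s23 2 3 0 1, s12 2 0 3 1, s34 0 2 3 1, s23 0 2 1 3]; ring
  · show f 3 2 0 2 = eps 3 2 0 2 * f 0 1 2 3
    rw [eps_z24 3 2 0, s12 3 2 0 2, s23 2 3 0 2, s12 2 0 3 2, s34 0 2 3 2, z23 0 2 3]; ring
  · show f 3 2 0 3 = eps 3 2 0 3 * f 0 1 2 3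
    rw [eps_z14 3 2 0, s12 3 2 0 3, s23 2 3 0 3, s12 2 0 3 3, z34 0 2 3]; ring
  · show f 3 2 1 0 = eps 3 2 1 0 * f 0 1 2 3
    rw [epsv_3210, s12 3 2 1 0, s23 2 3 1 0, s12 2 1 3 0, s34 1 2 3 0, s23 1 2 0 3, s12 1 0 2 3]; ring
  · show f 3 2 1 1 = eps 3 2 1 1 * f 0 1 2 3
    rw [eps_z34 3 2 1, s12 3 2 1 1, s23 2 3 1 1, s12 2 1 3 1, s34 1 2 3 1, s23 1 2 1 3, z12 1 2 3]; ring
  · show f 3 2 1 2 = eps 3 2 1 2 * f 0 1 2 3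
    rw [eps_z24 3 2 1, s12 3 2 1 2, s23 2 3 1 2, s12 2 1 3 2, s34 1 2 3 2, z23 1 2 3]; ring
  · show f 3 2 1 3 = eps 3 2 1 3 * f 0 1 2 3
    rw [eps_z14 3 2 1, s12 3 2 1 3, s23 2 3 1 3, s12 2 1 3 3, z34 1 2 3]; ring
  · show f 3 2 2 0 = eps 3 2 2 0 * f 0 1 2 3
    rw [eps_z23 3 2 0, s12 3 2 2 0, s23 2 3 2 0, s34 2 2 3 0, s23 2 2 0 3, s12 2 0 2 3, z23 0 2 3]; ring
  · show f 3 2 2 1 = eps 3 2 2 1 * f 0 1 2 3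
    rw [eps_z23 3 2 1, s12 3 2 2 1, s23 2 3 2 1, s34 2 2 3 1, s23 2 2 1 3, s12 2 1 2 3, z23 1 2 3]; ring
  · show f 3 2 2 2 = eps 3 2 2 2 * f 0 1 2 3
    rw [eps_z23 3 2 2, s12 3 2 2 2, s23 2 3 2 2, s34 2 2 3 2, z12 2 2 3]; ring
  · show f 3 2 2 3 = eps 3 2 2 3 * f 0 1 2 3
    rw [eps_z14 3 2 2, s12 3 2 2 3, s23 2 3 2 3, z12 2 3 3]; ring
  · show f 3 2 3 0 = eps 3 2 3 0 * f 0 1 2 3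
    rw [eps_z13 3 2 0, s12 3 2 3 0, s34 2 3 3 0, s23 2 3 0 3, s12 2 0 3 3, z34 0 2 3]; ring
  · show f 3 2 3 1 = eps 3 2 3 1 * f 0 1 2 3
    rw [eps_z13 3 2 1, s12 3 2 3 1, s34 2 3 3 1, s23 2 3 1 3, s12 2 1 3 3, z34 1 2 3]; ring
  · show f 3 2 3 2 = eps 3 2 3 2 * f 0 1 2 3
    rw [eps_z13 3 2 2, s12 3 2 3 2, s34 2 3 3 2, s23 2 3 2 3, z12 2 3 3]; ring
  · show f 3 2 3 3 = eps 3 2 3 3 * f 0 1 2 3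
    rw [eps_z13 3 2 3, s12 3 2 3 3, z23 2 3 3]; ring
  · show f 3 3 0 0 = eps 3 3 0 0 * f 0 1 2 3
    rw [eps_z12 3 0 0, s23 3 3 0 0, s12 3 0 3 0, s34 0 3 3 0, s23 0 3 0 3, z12 0 3 3]; ring
  · show f 3 3 0 1 = eps 3 3 0 1 * f 0 1 2 3
    rw [eps_z12 3 0 1, s23 3 3 0 1, s12 3 0 3 1, s34 0 3 3 1, s23 0 3 1 3, z34 0 1 3]; ring
  · show f 3 3 0 2 = eps 3 3 0 2 * f 0 1 2 3
    rw [eps_z12 3 0 2, s23 3 3 0 2, s12 3 0 3 2, s34 0 3 3 2, s23 0 3 2 3, z34 0 2 3]; ring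
  · show f 3 3 0 3 = eps 3 3 0 3 * f 0 1 2 3
    rw [eps_z12 3 0 3, s23 3 3 0 3, s12 3 0 3 3, z23 0 3 3]; ring
  · show f 3 3 1 0 = eps 3 3 1 0 * f 0 1 2 3
    rw [eps_z12 3 1 0, s23 3 3 1 0, s12 3 1 3 0, s34 1 3 3 0, s23 1 3 0 3, s12 1 0 3 3, z34 0 1 3]; ring
  · show f 3 3 1 1 = eps 3 3 1 1 * f 0 1 2 3
    rw [eps_z12 3 1 1, s23 3 3 1 1, s12 3 1 3 1, s34 1 3 3 1, s23 1 3 1 3, z12 1 3 3]; ring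
  · show f 3 3 1 2 = eps 3 3 1 2 * f 0 1 2 3
    rw [eps_z12 3 1 2, s23 3 3 1 2, s12 3 1 3 2, s34 1 3 3 2, s23 1 3 2 3, z34 1 2 3]; ring
  · show f 3 3 1 3 = eps 3 3 1 3 * f 0 1 2 3
    rw [eps_z12 3 1 3, s23 3 3 1 3, s12 3 1 3 3, z23 1 3 3]; ring
  · show f 3 3 2 0 = eps 3 3 2 0 * f 0 1 2 3
    rw [eps_z12 3 2 0, s23 3 3 2 0, s12 3 2 3 0, s34 2 3 3 0, s23 2 3 0 3, s12 2 0 3 3, z34 0 2 3]; ring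
  · show f 3 3 2 1 = eps 3 3 2 1 * f 0 1 2 3
    rw [eps_z12 3 2 1, s23 3 3 2 1, s12 3 2 3 1, s34 2 3 3 1, s23 2 3 1 3, s12 2 1 3 3, z34 1 2 3]; ring
  · show f 3 3 2 2 = eps 3 3 2 2 * f 0 1 2 3
    rw [eps_z12 3 2 2, s23 3 3 2 2, s12 3 2 3 2, s34 2 3 3 2, s23 2 3 2 3, z12 2 3 3]; ring
  · show f 3 3 2 3 = eps 3 3 2 3 * f 0 1 2 3
    rw [eps_z12 3 2 3, s23 3 3 2 3, s12 3 2 3 3, z23 2 3 3]; ring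
  · show f 3 3 3 0 = eps 3 3 3 0 * f 0 1 2 3
    rw [eps_z12 3 3 0, s34 3 3 3 0, s23 3 3 0 3, s12 3 0 3 3, z23 0 3 3]; ring
  · show f 3 3 3 1 = eps 3 3 3 1 * f 0 1 2 3
    rw [eps_z12 3 3 1, s34 3 3 3 1, s23 3 3 1 3, s12 3 1 3 3, z23 1 3 3]; ring
  · show f 3 3 3 2 = eps 3 3 3 2 * f 0 1 2 3
    rw [eps_z12 3 3 2, s34 3 3 3 2, s23 3 3 2 3, s12 3 2 3 3, z23 2 3 3]; ring
  · show f 3 3 3 3 = eps 3 3 3 3 * f 0 1 2 3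
    rw [eps_z12 3 3 3, z12 3 3 3]; ring


open Matrix Finset in
lemma det_fin_four' (A : Matrix (Fin 4) (Fin 4) ℝ) :
    A.det =
      A 0 0 * (A 1 1 * A 2 2 * A 3 3 - A 1 1 * A 2 3 * A 3 2 - A 1 2 * A 2 1 * A 3 3
        + A 1 2 * A 2 3 * A 3 1 + A 1 3 * A 2 1 * A 3 2 - A 1 3 * A 2 2 * A 3 1)
    - A 0 1 * (A 1 0 * A 2 2 * A 3 3 - A 1 0 * A 2 3 * A 3 2 - A 1 2 * A 2 0 * A 3 3
        + A 1 2 * A 2 3 * A 3 0 + A 1 3 * A 2 0 * A 3 2 - A 1 3 * A 2 2 * A 3 0)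
    + A 0 2 * (A 1 0 * A 2 1 * A 3 3 - A 1 0 * A 2 3 * A 3 1 - A 1 1 * A 2 0 * A 3 3
        + A 1 1 * A 2 3 * A 3 0 + A 1 3 * A 2 0 * A 3 1 - A 1 3 * A 2 1 * A 3 0)
    - A 0 3 * (A 1 0 * A 2 1 * A 3 2 - A 1 0 * A 2 2 * A 3 1 - A 1 1 * A 2 0 * A 3 2
        + A 1 1 * A 2 2 * A 3 0 + A 1 2 * A 2 0 * A 3 1 - A 1 2 * A 2 1 * A 3 0) := by
  rw [Matrix.det_succ_row_zero]
  simp only [Fin.sum_univ_four, Matrix.det_fin_three, Matrix.submatrix_apply]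
  have e1 : (Fin.succ 2 : Fin 4) = 3 := by decide
  have sA00 : Fin.succAbove (0 : Fin 4) (0 : Fin 3) = 1 := by decide
  have sA01 : Fin.succAbove (0 : Fin 4) (1 : Fin 3) = 2 := by decide
  have sA02 : Fin.succAbove (0 : Fin 4) (2 : Fin 3) = 3 := by decide
  have sA10 : Fin.succAbove (1 : Fin 4) (0 : Fin 3) = 0 := by decide
  have sA11 : Fin.succAbove (1 : Fin 4) (1 : Fin 3) = 2 := by decide
  have sA12 : Fin.succAbove (1 : Fin 4) (2 : Fin 3) = 3 := by decide
  have sA20 : Fin.succAbove (2 : Fin 4) (0 : Fin 3) = 0 := by decide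
  have sA21 : Fin.succAbove (2 : Fin 4) (1 : Fin 3) = 1 := by decide
  have sA22 : Fin.succAbove (2 : Fin 4) (2 : Fin 3) = 3 := by decide
  have sA30 : Fin.succAbove (3 : Fin 4) (0 : Fin 3) = 0 := by decide
  have sA31 : Fin.succAbove (3 : Fin 4) (1 : Fin 3) = 1 := by decide
  have sA32 : Fin.succAbove (3 : Fin 4) (2 : Fin 3) = 2 := by decide
  have e4 : ((-1 : ℝ)) ^ ((3 : Fin 4) : ℕ) = -1 := by rw [show ((3:Fin 4):ℕ) = 3 from rfl]; norm_num
  simp only [e4, e1, sA00, sA01, sA02, sA10, sA11, sA12, sA20, sA21, sA22, sA30, sA31, sA32]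
  norm_num
  ring

lemma sum_antisym (f : Fin 4 → Fin 4 → ℝ) (h : ∀ x y, f x y = -f y x) :
    (∑ x : Fin 4, ∑ y : Fin 4, f x y) = 0 := by
  have h1 : (∑ x : Fin 4, ∑ y : Fin 4, f x y) = ∑ y : Fin 4, ∑ x : Fin 4, f x y :=
    Finset.sum_comm
  have h2 : (∑ y : Fin 4, ∑ x : Fin 4, f x y) = -∑ y : Fin 4, ∑ x : Fin 4, f y x := by
    rw [← Finset.sum_neg_distrib]
    exact Finset.sum_congr rfl fun y _ => by
      rw [← Finset.sum_neg_distrib]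
      exact Finset.sum_congr rfl fun x _ => h x y
  have h3 : (∑ y : Fin 4, ∑ x : Fin 4, f y x) = ∑ x : Fin 4, ∑ y : Fin 4, f x y := rfl
  rw [h3] at h2
  linarith [h1.trans h2]

lemma star0123 (θ : Matrix (Fin 4) (Fin 4) ℝ) :
    (∑ I : Fin 4, ∑ J : Fin 4, θ I 0 * θ J 1 *
      (∑ K : Fin 4, ∑ L : Fin 4, eps I J K L * θ K 2 * θ L 3)) = θ.det := by
  rw [det_fin_four']
  simp only [Fin.sum_univ_four]
  simp only [eps_z12, eps_z13, eps_z14, eps_z23, eps_z24, eps_z34,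
    epsv_0123, epsv_0132, epsv_0213, epsv_0231, epsv_0312, epsv_0321,
    epsv_1023, epsv_1032, epsv_1203, epsv_1230, epsv_1302, epsv_1320,
    epsv_2013, epsv_2031, epsv_2103, epsv_2130, epsv_2301, epsv_2310,
    epsv_3012, epsv_3021, epsv_3102, epsv_3120, epsv_3201, epsv_3210]
  ring

lemma sc (f g : Fin 4 → Fin 4 → ℝ) (h : ∀ x y, f x y = g x y) :
    (∑ x : Fin 4, ∑ y : Fin 4, f x y) = ∑ x : Fin 4, ∑ y : Fin 4, g x y :=
  Finset.sum_congr rfl fun x _ => Finset.sum_congr rfl fun y _ => h x y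

lemma sneg (f : Fin 4 → Fin 4 → ℝ) :
    (∑ x : Fin 4, ∑ y : Fin 4, -f x y) = -∑ x : Fin 4, ∑ y : Fin 4, f x y := by
  simp [Finset.sum_neg_distrib]

lemma LF1a (θ : Matrix (Fin 4) (Fin 4) ℝ) (I a b : Fin 4) :
    (∑ J : Fin 4, (∑ K : Fin 4, ∑ L : Fin 4, eps I J K L * θ K a * θ L b) * θ J a) = 0 := by
  have h : (∑ J : Fin 4, (∑ K : Fin 4, ∑ L : Fin 4, eps I J K L * θ K a * θ L b) * θ J a)
      = ∑ J : Fin 4, ∑ K : Fin 4, (∑ L : Fin 4, eps I J K L * θ K a * θ L b * θ J a) := by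
    refine Finset.sum_congr rfl fun J _ => ?_
    rw [Finset.sum_mul]
    exact Finset.sum_congr rfl fun K _ => by rw [Finset.sum_mul]
  rw [h]
  refine sum_antisym _ fun J K => ?_
  rw [← Finset.sum_neg_distrib]
  refine Finset.sum_congr rfl fun L _ => ?_
  rw [eps_swap23 I J K L]; ring

lemma LF1b (θ : Matrix (Fin 4) (Fin 4) ℝ) (I a b : Fin 4) :
    (∑ J : Fin 4, (∑ K : Fin 4, ∑ L : Fin 4, eps I J K L * θ K a * θ L b) * θ J b) = 0 := by
  have h : (∑ J : Fin 4, (∑ K : Fin 4, ∑ L : Fin 4, eps I J K L * θ K a * θ L b) * θ J b)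
      = ∑ J : Fin 4, ∑ L : Fin 4, (∑ K : Fin 4, eps I J K L * θ K a * θ L b * θ J b) := by
    refine Finset.sum_congr rfl fun J _ => ?_
    rw [Finset.sum_mul]
    rw [show (∑ K : Fin 4, (∑ L : Fin 4, eps I J K L * θ K a * θ L b) * θ J b)
        = ∑ K : Fin 4, ∑ L : Fin 4, eps I J K L * θ K a * θ L b * θ J b from
      Finset.sum_congr rfl fun K _ => by rw [Finset.sum_mul]]
    exact Finset.sum_comm
  rw [h]
  refine sum_antisym _ fun J L => ?_
  rw [← Finset.sum_neg_distrib]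
  refine Finset.sum_congr rfl fun K _ => ?_
  rw [eps_swap24 I J K L]; ring

lemma LF2 (θ : Matrix (Fin 4) (Fin 4) ℝ) (I a b c : Fin 4) :
    (∑ J : Fin 4, ((∑ K : Fin 4, ∑ L : Fin 4, eps I J K L * θ K a * θ L b) * θ J c
      + (∑ K : Fin 4, ∑ L : Fin 4, eps I J K L * θ K a * θ L c) * θ J b)) = 0 := by
  have h : (∑ J : Fin 4, ((∑ K : Fin 4, ∑ L : Fin 4, eps I J K L * θ K a * θ L b) * θ J c
      + (∑ K : Fin 4, ∑ L : Fin 4, eps I J K L * θ K a * θ L c) * θ J b))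
      = ∑ J : Fin 4, ∑ L : Fin 4, (∑ K : Fin 4,
          (eps I J K L * θ K a * θ L b * θ J c + eps I J K L * θ K a * θ L c * θ J b)) := by
    refine Finset.sum_congr rfl fun J _ => ?_
    rw [Finset.sum_mul, Finset.sum_mul, ← Finset.sum_add_distrib]
    rw [show (∑ K : Fin 4, ((∑ L : Fin 4, eps I J K L * θ K a * θ L b) * θ J c
        + (∑ L : Fin 4, eps I J K L * θ K a * θ L c) * θ J b))
        = ∑ K : Fin 4, ∑ L : Fin 4,
          (eps I J K L * θ K a * θ L b * θ J c + eps I J K L * θ K a * θ L c * θ J b) from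
      Finset.sum_congr rfl fun K _ => by
        rw [Finset.sum_mul, Finset.sum_mul, ← Finset.sum_add_distrib]]
    exact Finset.sum_comm
  rw [h]
  refine sum_antisym _ fun J L => ?_
  rw [← Finset.sum_neg_distrib]
  refine Finset.sum_congr rfl fun K _ => ?_
  rw [eps_swap24 I J K L]; ring

lemma key (θ : Matrix (Fin 4) (Fin 4) ℝ) (T : Fin 4 → Fin 4 → Fin 4 → Fin 4 → ℝ)
    (hT1 : ∀ I J a b, T I J a b = -T J I a b)
    (hT2 : ∀ I J a b, T I J a b = -T I J b a)
    (hC1a : ∀ I a b, (∑ J : Fin 4, T I J a b * θ J a) = 0)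
    (hC1b : ∀ I a b, (∑ J : Fin 4, T I J a b * θ J b) = 0)
    (hC2 : ∀ I a b c, c ≠ a → c ≠ b →
      (∑ J : Fin 4, (T I J a b * θ J c + T I J a c * θ J b)) = 0) :
    ∀ i j a b, (∑ x : Fin 4, ∑ y : Fin 4, θ x i * θ y j * T x y a b)
      = eps i j a b * (∑ x : Fin 4, ∑ y : Fin 4, θ x 0 * θ y 1 * T x y 2 3) := by
  set D : Fin 4 → Fin 4 → Fin 4 → Fin 4 → ℝ :=
    fun i j a b => ∑ x : Fin 4, ∑ y : Fin 4, θ x i * θ y j * T x y a b with hD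
  have s12 : ∀ i j a b, D i j a b = -D j i a b := by
    intro i j a b
    rw [hD]
    calc (∑ x : Fin 4, ∑ y : Fin 4, θ x i * θ y j * T x y a b)
        = ∑ x : Fin 4, ∑ y : Fin 4, -(θ x i * θ y j * T y x a b) :=
          sc _ _ fun x y => by rw [hT1 x y a b]; ring
      _ = -∑ x : Fin 4, ∑ y : Fin 4, θ x i * θ y j * T y x a b := sneg _
      _ = -∑ y : Fin 4, ∑ x : Fin 4, θ x i * θ y j * T y x a b := by rw [Finset.sum_comm]
      _ = -∑ x : Fin 4, ∑ y : Fin 4, θ x j * θ y i * T x y a b := by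
          rw [show (∑ y : Fin 4, ∑ x : Fin 4, θ x i * θ y j * T y x a b)
              = ∑ x : Fin 4, ∑ y : Fin 4, θ x j * θ y i * T x y a b from
            sc _ _ fun x y => by ring]
  have s34 : ∀ i j a b, D i j a b = -D i j b a := by
    intro i j a b
    rw [hD]
    calc (∑ x : Fin 4, ∑ y : Fin 4, θ x i * θ y j * T x y a b)
        = ∑ x : Fin 4, ∑ y : Fin 4, -(θ x i * θ y j * T x y b a) :=
          sc _ _ fun x y => by rw [hT2 x y a b]; ring
      _ = -∑ x : Fin 4, ∑ y : Fin 4, θ x i * θ y j * T x y b a := sneg _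
  have hz1 : ∀ i a b, D i a a b = 0 := by
    intro i a b
    show (∑ x : Fin 4, ∑ y : Fin 4, θ x i * θ y a * T x y a b) = 0
    rw [show (∑ x : Fin 4, ∑ y : Fin 4, θ x i * θ y a * T x y a b)
        = ∑ x : Fin 4, θ x i * ∑ y : Fin 4, T x y a b * θ y a from
      Finset.sum_congr rfl fun x _ => by
        rw [Finset.mul_sum]; exact Finset.sum_congr rfl fun y _ => by ring]
    simp [hC1a]
  have hz2 : ∀ i a b, D i b a b = 0 := by
    intro i a b
    show (∑ x : Fin 4, ∑ y : Fin 4, θ x i * θ y b * T x y a b) = 0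
    rw [show (∑ x : Fin 4, ∑ y : Fin 4, θ x i * θ y b * T x y a b)
        = ∑ x : Fin 4, θ x i * ∑ y : Fin 4, T x y a b * θ y b from
      Finset.sum_congr rfl fun x _ => by
        rw [Finset.mul_sum]; exact Finset.sum_congr rfl fun y _ => by ring]
    simp [hC1b]
  have hz34 : ∀ i j a, D i j a a = 0 := fun i j a => by have := s34 i j a a; linarith
  have s24 : ∀ i c a b, D i c a b = -D i b a c := by
    intro i c a b
    by_cases hca : c = a
    · subst hca; rw [hz1, hz34]; ring
    by_cases hcb : c = b
    · subst hcb; rw [hz2]; simp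
    have hsum : D i c a b + D i b a c = 0 := by
      show ((∑ x : Fin 4, ∑ y : Fin 4, θ x i * θ y c * T x y a b)
        + ∑ x : Fin 4, ∑ y : Fin 4, θ x i * θ y b * T x y a c) = 0
      rw [show ((∑ x : Fin 4, ∑ y : Fin 4, θ x i * θ y c * T x y a b)
          + ∑ x : Fin 4, ∑ y : Fin 4, θ x i * θ y b * T x y a c)
          = ∑ x : Fin 4, θ x i * ∑ y : Fin 4, (T x y a b * θ y c + T x y a c * θ y b) from by
        rw [← Finset.sum_add_distrib]
        refine Finset.sum_congr rfl fun x _ => ?_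
        rw [← Finset.sum_add_distrib, Finset.mul_sum]
        exact Finset.sum_congr rfl fun y _ => by ring]
      simp [hC2 _ _ _ _ hca hcb]
    linarith
  have s23 : ∀ i j a b, D i j a b = -D i a j b := by
    intro i j a b
    have h1 := s34 i j a b
    have h2 := s24 i j b a
    have h3 := s34 i a b j
    linarith
  exact rep0 D s12 s23 s34


/-- Linear simplicity lemma: for a nondegenerate tetrad `θ`, a bivector array `T`
satisfies the direct linear simplicity system if and only if it is proportional to
the simple array `⋆(θ ∧ θ)`. -/
theorem linear_simplicity_lemma (θ : Matrix (Fin 4) (Fin 4) ℝ)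
    (hθ : θ.det ≠ 0)
    (T : Fin 4 → Fin 4 → Fin 4 → Fin 4 → ℝ)
    (hT1 : ∀ I J a b, T I J a b = -T J I a b)
    (hT2 : ∀ I J a b, T I J a b = -T I J b a) :
    ((∀ I a b : Fin 4,
        (∑ J : Fin 4, T I J a b * θ J a = 0) ∧
        (∑ J : Fin 4, T I J a b * θ J b = 0)) ∧
     (∀ I a b c : Fin 4, c ≠ a → c ≠ b →
        ∑ J : Fin 4, (T I J a b * θ J c + T I J a c * θ J b) = 0))
    ↔ ∃ l : ℝ, ∀ I J a b : Fin 4,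
        T I J a b = l * ∑ K : Fin 4, ∑ L : Fin 4, eps I J K L * θ K a * θ L b := by
  constructor
  · rintro ⟨h1, h2⟩
    have hF1 : ∀ I J a b : Fin 4,
        (∑ K : Fin 4, ∑ L : Fin 4, eps I J K L * θ K a * θ L b)
        = -(∑ K : Fin 4, ∑ L : Fin 4, eps J I K L * θ K a * θ L b) := by
      intro I J a b
      rw [← sneg]
      exact sc _ _ fun K L => by rw [eps_swap12 I J K L]; ring
    have hF2 : ∀ I J a b : Fin 4,
        (∑ K : Fin 4, ∑ L : Fin 4, eps I J K L * θ K a * θ L b)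
        = -(∑ K : Fin 4, ∑ L : Fin 4, eps I J K L * θ K b * θ L a) := by
      intro I J a b
      calc (∑ K : Fin 4, ∑ L : Fin 4, eps I J K L * θ K a * θ L b)
          = ∑ K : Fin 4, ∑ L : Fin 4, -(eps I J L K * θ K a * θ L b) :=
            sc _ _ fun K L => by rw [eps_swap34 I J K L]; ring
        _ = -∑ K : Fin 4, ∑ L : Fin 4, eps I J L K * θ K a * θ L b := sneg _
        _ = -∑ L : Fin 4, ∑ K : Fin 4, eps I J L K * θ K a * θ L b := by rw [Finset.sum_comm]
        _ = -(∑ K : Fin 4, ∑ L : Fin 4, eps I J K L * θ K b * θ L a) := by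
            rw [show (∑ L : Fin 4, ∑ K : Fin 4, eps I J L K * θ K a * θ L b)
                = ∑ K : Fin 4, ∑ L : Fin 4, eps I J K L * θ K b * θ L a from
              sc _ _ fun K L => by ring]
    have keyT := key θ T hT1 hT2 (fun I a b => (h1 I a b).1) (fun I a b => (h1 I a b).2) h2
    have keyF := key θ
      (fun I J a b => ∑ K : Fin 4, ∑ L : Fin 4, eps I J K L * θ K a * θ L b)
      hF1 hF2 (fun I a b => LF1a θ I a b) (fun I a b => LF1b θ I a b)
      (fun I a b c _ _ => LF2 θ I a b c)
    have hstar : (∑ x : Fin 4, ∑ y : Fin 4, θ x 0 * θ y 1 *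
        (∑ K : Fin 4, ∑ L : Fin 4, eps x y K L * θ K 2 * θ L 3)) = θ.det := star0123 θ
    set lT : ℝ := ∑ x : Fin 4, ∑ y : Fin 4, θ x 0 * θ y 1 * T x y 2 3 with hlT
    refine ⟨lT / θ.det, ?_⟩
    intro I J a b
    set M : Matrix (Fin 4) (Fin 4) ℝ := Matrix.of fun i j =>
      T i j a b - lT / θ.det * ∑ K : Fin 4, ∑ L : Fin 4, eps i j K L * θ K a * θ L b with hM
    have hMzero : θ.transpose * M * θ = 0 := by
      ext i j
      rw [Matrix.mul_apply]
      show (∑ y : Fin 4, (θ.transpose * M) i y * θ y j) = 0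
      have e1 : ∀ y, (θ.transpose * M) i y = ∑ x : Fin 4, θ x i * M x y := by
        intro y; rw [Matrix.mul_apply]
        exact Finset.sum_congr rfl fun x _ => by rw [Matrix.transpose_apply]
      calc (∑ y : Fin 4, (θ.transpose * M) i y * θ y j)
          = ∑ y : Fin 4, ∑ x : Fin 4, θ x i * M x y * θ y j := by
            refine Finset.sum_congr rfl fun y _ => ?_
            rw [e1 y, Finset.sum_mul]
        _ = ∑ x : Fin 4, ∑ y : Fin 4, θ x i * M x y * θ y j := Finset.sum_comm
        _ = ∑ x : Fin 4, ∑ y : Fin 4, (θ x i * θ y j * T x y a b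
              - lT / θ.det * (θ x i * θ y j *
                (∑ K : Fin 4, ∑ L : Fin 4, eps x y K L * θ K a * θ L b))) := by
            refine sc _ _ fun x y => ?_
            rw [hM]
            show θ x i * (T x y a b - lT / θ.det *
                ∑ K : Fin 4, ∑ L : Fin 4, eps x y K L * θ K a * θ L b) * θ y j = _
            ring
        _ = (∑ x : Fin 4, ∑ y : Fin 4, θ x i * θ y j * T x y a b)
            - lT / θ.det * ∑ x : Fin 4, ∑ y : Fin 4, θ x i * θ y j *
                (∑ K : Fin 4, ∑ L : Fin 4, eps x y K L * θ K a * θ L b) := by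
            rw [Finset.mul_sum, ← Finset.sum_sub_distrib]
            refine Finset.sum_congr rfl fun x _ => ?_
            rw [Finset.mul_sum, ← Finset.sum_sub_distrib]
        _ = 0 := by
            rw [keyT i j a b, keyF i j a b, hstar]
            field_simp
            ring
    have hdTu : IsUnit (θ.transpose).det := by
      rw [Matrix.det_transpose]; exact isUnit_iff_ne_zero.2 hθ
    have hdu : IsUnit θ.det := isUnit_iff_ne_zero.2 hθ
    have hMθ : M * θ = 0 := by
      have h := congrArg (fun X => (θ.transpose)⁻¹ * X) hMzero
      simp only [Matrix.mul_assoc] at h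
      rw [← Matrix.mul_assoc (θ.transpose)⁻¹ θ.transpose, Matrix.nonsing_inv_mul _ hdTu,
        Matrix.one_mul, Matrix.mul_zero] at h
      exact h
    have hM0 : M = 0 := by
      have h := congrArg (fun X => X * θ⁻¹) hMθ
      simp only [Matrix.mul_assoc, Matrix.mul_nonsing_inv _ hdu, Matrix.mul_one,
        Matrix.zero_mul] at h
      exact h
    have hentry := congrFun (congrFun hM0 I) J
    have : T I J a b - lT / θ.det * ∑ K : Fin 4, ∑ L : Fin 4, eps I J K L * θ K a * θ L b
        = 0 := hentry
    linarith
  · rintro ⟨l, hl⟩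
    constructor
    · intro I a b
      constructor
      · rw [show (∑ J : Fin 4, T I J a b * θ J a)
            = l * ∑ J : Fin 4, (∑ K : Fin 4, ∑ L : Fin 4, eps I J K L * θ K a * θ L b) * θ J a
            from by
          rw [Finset.mul_sum]
          exact Finset.sum_congr rfl fun J _ => by rw [hl I J a b]; ring]
        rw [LF1a θ I a b, mul_zero]
      · rw [show (∑ J : Fin 4, T I J a b * θ J b)
            = l * ∑ J : Fin 4, (∑ K : Fin 4, ∑ L : Fin 4, eps I J K L * θ K a * θ L b) * θ J b
            from by
          rw [Finset.mul_sum]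
          exact Finset.sum_congr rfl fun J _ => by rw [hl I J a b]; ring]
        rw [LF1b θ I a b, mul_zero]
    · intro I a b c _ _
      rw [show (∑ J : Fin 4, (T I J a b * θ J c + T I J a c * θ J b))
          = l * ∑ J : Fin 4, ((∑ K : Fin 4, ∑ L : Fin 4, eps I J K L * θ K a * θ L b) * θ J c
            + (∑ K : Fin 4, ∑ L : Fin 4, eps I J K L * θ K a * θ L c) * θ J b) from by
        rw [Finset.mul_sum]
        exact Finset.sum_congr rfl fun J _ => by rw [hl I J a b, hl I J a c]; ring]
      rw [LF2 θ I a b c, mul_zero]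
end

section
/- For all real numbers A₁, A₂, A₃, A₄, A₅, A₆ > 0, the Hopf-link volume-simplicity conditions A₁·A₆ = A₂·A₅ and A₂·A₅ = A₃·A₄ hold if and only if there exist real numbers Ex, Ey, Ez, Et > 0 with A₁ = Ey·Ez, A₂ = Ez·Ex, A₃ = Ex·Ey, A₄ = Ez·Et, A₅ = Et·Ey, and A₆ = Ex·Et. -/
/-!
A cuboid is recovered from the areas `a, b, c` of the three faces at a vertex: its volume is
`V = √(abc)` and its edges are `V/a, V/b, V/c`. Applied to `A₁, A₂, A₃` this gives `Ex, Ey, Ez`;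
putting `Et = A₄ / Ez`, the two volume-simplicity equations then say exactly that `A₅ = Et·Ey`
and `A₆ = Ex·Et`.
-/

theorem exists_cuboid_edges_of_face_areas {a b c : ℝ} (ha : 0 < a) (hb : 0 < b) (hc : 0 < c) :
    ∃ x y z : ℝ, 0 < x ∧ 0 < y ∧ 0 < z ∧ a = y * z ∧ b = z * x ∧ c = x * y := by
  obtain ⟨V, hV0, hV⟩ : ∃ V : ℝ, 0 < V ∧ V ^ 2 = a * b * c :=
    ⟨√(a * b * c), by positivity, Real.sq_sqrt (by positivity)⟩
  refine ⟨V / a, V / b, V / c, by positivity, by positivity, by positivity, ?_, ?_, ?_⟩ <;>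
  · field_simp
    linear_combination -hV

theorem hypercuboid_reconstruction_general (A₁ A₂ A₃ A₄ A₅ A₆ : ℝ)
    (h₁ : 0 < A₁) (h₂ : 0 < A₂) (h₃ : 0 < A₃)
    (h₄ : 0 < A₄) :
    (A₁ * A₆ = A₂ * A₅ ∧ A₂ * A₅ = A₃ * A₄) ↔
    ∃ Ex Ey Ez Et : ℝ, 0 < Ex ∧ 0 < Ey ∧ 0 < Ez ∧ 0 < Et ∧
      A₁ = Ey * Ez ∧ A₂ = Ez * Ex ∧ A₃ = Ex * Ey ∧
      A₄ = Ez * Et ∧ A₅ = Et * Ey ∧ A₆ = Ex * Et := by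
  constructor
  · rintro ⟨h16, h25⟩
    obtain ⟨Ex, Ey, Ez, hx, hy, hz, rfl, rfl, rfl⟩ := exists_cuboid_edges_of_face_areas h₁ h₂ h₃
    obtain ⟨Et, ht, rfl⟩ : ∃ Et, 0 < Et ∧ A₄ = Ez * Et :=
      ⟨A₄ / Ez, by positivity, (mul_div_cancel₀ _ hz.ne').symm⟩
    refine ⟨Ex, Ey, Ez, Et, hx, hy, hz, ht, rfl, rfl, rfl, rfl, ?_, ?_⟩
    · exact mul_left_cancel₀ (mul_pos hz hx).ne' (by linear_combination h25)
    · exact mul_left_cancel₀ (mul_pos hy hz).ne' (by linear_combination h16 + h25)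
  · rintro ⟨Ex, Ey, Ez, Et, -, -, -, -, rfl, rfl, rfl, rfl, rfl, rfl⟩
    constructor <;> ring

/-- Hopf-link volume simplicity for the hypercuboid: the conditions
`A₁A₆ = A₂A₅ = A₃A₄` on six positive areas hold iff they come from four positive
edge lengths of a geometric hypercuboid. -/
theorem hypercuboid_reconstruction (A₁ A₂ A₃ A₄ A₅ A₆ : ℝ)
    (h₁ : 0 < A₁) (h₂ : 0 < A₂) (h₃ : 0 < A₃)
    (h₄ : 0 < A₄) (h₅ : 0 < A₅) (h₆ : 0 < A₆) :
    (A₁ * A₆ = A₂ * A₅ ∧ A₂ * A₅ = A₃ * A₄) ↔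
    ∃ Ex Ey Ez Et : ℝ, 0 < Ex ∧ 0 < Ey ∧ 0 < Ez ∧ 0 < Et ∧
      A₁ = Ey * Ez ∧ A₂ = Ez * Ex ∧ A₃ = Ex * Ey ∧
      A₄ = Ez * Et ∧ A₅ = Et * Ey ∧ A₆ = Ex * Et :=
  hypercuboid_reconstruction_general A₁ A₂ A₃ A₄ A₅ A₆ h₁ h₂ h₃ h₄
end

section
/- Let v : Fin 4 → ℝ and b : Fin 4 → Fin 4 → ℝ with v i > 0 for all i and b i k > 0 for all i ≠ k. Suppose the proportion relations hold: for all pairwise distinct i, j, k : Fin 4, v i * b j k = v j * b i k. Then: (1) for all pairwise distinct i, j, k, l : Fin 4, b i k * b j l = b i l * b j k (the geometricity conditions); and (2) there exists E : Fin 4 → ℝ with E k > 0 for all k, such that v i = E k * b i k for all i ≠ k (invariantly defined edge lengths, with each volume v i equal to any of its base areas times the corresponding height). -/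
/-- The linearised volume constraints of the hypercuboid imply the geometricity
conditions among the areas and the existence of invariantly defined edge
lengths. -/
theorem hypercuboid_linear_volume (v : Fin 4 → ℝ) (b : Fin 4 → Fin 4 → ℝ)
    (hv : ∀ i, 0 < v i) (hb : ∀ i k, i ≠ k → 0 < b i k)
    (hprop : ∀ i j k : Fin 4, i ≠ j → i ≠ k → j ≠ k →
      v i * b j k = v j * b i k) :
    (∀ i j k l : Fin 4, i ≠ j → i ≠ k → i ≠ l → j ≠ k → j ≠ l → k ≠ l →
        b i k * b j l = b i l * b j k) ∧
    (∃ E : Fin 4 → ℝ, (∀ k, 0 < E k) ∧ ∀ i k, i ≠ k → v i = E k * b i k) := by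
  constructor
  · intro i j k l hij hik hil hjk hjl hkl
    have h1 := hprop i j k hij hik hjk
    have h2 := hprop i j l hij hil hjl
    have hvi := (hv i).ne'
    have : v i * (b i k * b j l) = v i * (b i l * b j k) := by
      calc v i * (b i k * b j l) = b i k * (v i * b j l) := by ring
        _ = b i k * (v j * b i l) := by rw [h2]
        _ = b i l * (v j * b i k) := by ring
        _ = b i l * (v i * b j k) := by rw [h1]
        _ = v i * (b i l * b j k) := by ring
    exact mul_left_cancel₀ hvi this
  · set p : Fin 4 → Fin 4 := fun k => if k = 0 then 1 else 0 with hp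
    have hpk : ∀ k, p k ≠ k := by
      intro k
      by_cases h : k = 0 <;> simp [hp, h] <;> exact fun he => h he.symm
    refine ⟨fun k => v (p k) / b (p k) k, fun k => div_pos (hv _) (hb _ _ (hpk k)), ?_⟩
    intro i k hik
    have hbpk := (hb _ _ (hpk k)).ne'
    rw [div_mul_eq_mul_div, eq_div_iff hbpk]
    by_cases h : i = p k
    · subst h; ring
    · have := hprop i (p k) k h hik (hpk k)
      linarith [this]
end
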